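/- arXiv:1606.09240 — 9 statements merged into one kernel-verified Lean document; each statement's English description precedes it below -/
import Mathlib

section
/- Let E be an elliptic curve without complex multiplication over a field k of characteristic 0, and let C, C' ⊆ E be k-rational cyclic subgroups of order d. If the quotient elliptic curves E/C and E/C' are isomorphic over k, then C = C'. -/
/-!
Put `ψ = ι⁻¹ ∘ π' : E → E/C`, so that `ker ψ = C'`. Composed with the dual `π̂` of `π` it becomes
an endomorphism of `E`, hence `π̂ ∘ ψ = z` for some `z ∈ ℤ` as `E` has no CM, and
`d • ψ = π ∘ π̂ ∘ ψ = z • π`. For surjective `f` one has `|ker (n • f)| = n² |ker f|`, so comparing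
kernels gives `|z| = d`. Then `d • (ψ ∓ π) = 0`; an algebraic map with image in the finite group
`(E/C)[d]` vanishes, so `ψ = ±π` and `C' = ker ψ = ker π = C`.
-/

/-- The `n`-torsion subgroup of an abelian group. -/
def nTorsion (n : ℕ) (A : Type) [AddCommGroup A] : AddSubgroup A where
  carrier := {x | n • x = 0}
  zero_mem' := by simp
  add_mem' := by
    intro a b ha hb
    simp only [Set.mem_setOf_eq] at *
    rw [smul_add, ha, hb, add_zero]
  neg_mem' := by
    intro a ha
    simp only [Set.mem_setOf_eq] at *
    rw [smul_neg, ha, neg_zero]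

theorem AddSubgroup.card_comap_of_surjective {A B : Type*} [AddGroup A] [AddGroup B]
    {f : A →+ B} (hf : Function.Surjective f) (H : AddSubgroup B) :
    Nat.card (H.comap f) = Nat.card H * Nat.card f.ker := by
  have hker : (f.addSubgroupComap H).ker = f.ker.addSubgroupOf (H.comap f) := by
    ext x
    rw [AddMonoidHom.mem_ker, AddSubgroup.mem_addSubgroupOf, AddMonoidHom.mem_ker,
      ← ZeroMemClass.coe_eq_zero]
    rfl
  rw [AddSubgroup.card_eq_card_quotient_mul_card_addSubgroup (f.addSubgroupComap H).ker,
    Nat.card_congr (QuotientAddGroup.quotientKerEquivOfSurjective _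
      (f.addSubgroupComap_surjective_of_surjective H hf)).toEquiv, hker,
    Nat.card_congr (AddSubgroup.addSubgroupOfEquivOfLe
      (fun x hx => by simp [AddMonoidHom.mem_ker.mp hx])).toEquiv]

namespace nTorsion

variable {A B : Type} [AddCommGroup A] [AddCommGroup B]

theorem mem_iff {n : ℕ} {x : A} : x ∈ nTorsion n A ↔ n • x = 0 := Iff.rfl

theorem comap_eq_ker_nsmul (f : A →+ B) (n : ℕ) : (nTorsion n B).comap f = (n • f).ker := by
  ext; rfl

theorem comap_eq_ker_zsmul (f : A →+ B) (z : ℤ) :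
    (nTorsion z.natAbs B).comap f = (z • f).ker := by
  ext; simp [mem_iff]

theorem ne_top (htors : ∀ m : ℕ, 0 < m → Nat.card (nTorsion m A) = m ^ 2) {n : ℕ} (hn : 0 < n) :
    nTorsion n A ≠ ⊤ := by
  intro htop
  have htop2 : nTorsion (2 * n) A = ⊤ := by
    rw [eq_top_iff] at htop ⊢
    intro x hx
    rw [mem_iff, mul_comm, mul_nsmul, mem_iff.mp (htop hx), nsmul_zero]
  have := htors (2 * n) (by omega)
  rw [htop2, ← htop, htors n hn] at this
  nlinarith

theorem finite (htors : ∀ m : ℕ, 0 < m → Nat.card (nTorsion m A) = m ^ 2) {n : ℕ} (hn : 0 < n) :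
    Finite (nTorsion n A) :=
  Nat.finite_of_card_ne_zero (by rw [htors n hn]; positivity)

end nTorsion

open nTorsion

section

variable {E Q : Type} [AddCommGroup E] [AddCommGroup Q]

theorem nsmul_ne_zero_of_surjective (htors : ∀ m : ℕ, 0 < m → Nat.card (nTorsion m Q) = m ^ 2)
    {f : E →+ Q} (hf : Function.Surjective f) {n : ℕ} (hn : 0 < n) : n • f ≠ 0 := by
  intro h
  refine ne_top htors hn (eq_top_iff.mpr fun q _ => ?_)
  obtain ⟨x, rfl⟩ := hf q
  exact DFunLike.congr_fun h x

theorem range_finite_of_nsmul_eq_zero (htors : ∀ m : ℕ, 0 < m → Nat.card (nTorsion m Q) = m ^ 2)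
    {f : E →+ Q} {n : ℕ} (hn : 0 < n) (h : n • f = 0) : (Set.range f).Finite := by
  have := finite htors hn
  refine Set.Finite.subset (nTorsion n Q : Set Q).toFinite ?_
  rintro _ ⟨x, rfl⟩
  exact DFunLike.congr_fun h x

theorem natAbs_eq_of_nsmul_eq_zsmul (htors : ∀ m : ℕ, 0 < m → Nat.card (nTorsion m Q) = m ^ 2)
    {f g : E →+ Q} (hf : Function.Surjective f) (hg : Function.Surjective g)
    (hcard : Nat.card f.ker = Nat.card g.ker) (hker : Nat.card g.ker ≠ 0)
    {n : ℕ} (hn : 0 < n) {z : ℤ} (h : n • f = z • g) : z.natAbs = n := by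
  have hz : 0 < z.natAbs := by
    refine Int.natAbs_pos.mpr fun hz0 => nsmul_ne_zero_of_surjective htors hf hn ?_
    rw [h, hz0, zero_smul]
  have hcards : n ^ 2 * Nat.card g.ker = z.natAbs ^ 2 * Nat.card g.ker := by
    rw [← htors n hn, ← htors _ hz, ← hcard, ← AddSubgroup.card_comap_of_surjective hf,
      hcard, ← AddSubgroup.card_comap_of_surjective hg, comap_eq_ker_nsmul, comap_eq_ker_zsmul, h]
  exact (Nat.pow_left_injective two_ne_zero
    (Nat.eq_of_mul_eq_mul_right (Nat.pos_of_ne_zero hker) hcards)).symm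

end

theorem kernel_determines_quotient_of_nonCM_general
    (E Q Q' : Type) [AddCommGroup E] [AddCommGroup Q] [AddCommGroup Q']
    (AlgEE : (E →+ E) → Prop) (AlgEQ : (E →+ Q) → Prop) (AlgEQ' : (E →+ Q') → Prop)
    (AlgQE : (Q →+ E) → Prop) (AlgQ'Q : (Q' →+ Q) → Prop)
    -- closure properties of algebraic maps
    (halg_sub : ∀ f g : E →+ Q, AlgEQ f → AlgEQ g → AlgEQ (f - g))
    (halg_add : ∀ f g : E →+ Q, AlgEQ f → AlgEQ g → AlgEQ (f + g))
    (halg_compEQ'Q : ∀ (f : E →+ Q') (g : Q' →+ Q), AlgEQ' f → AlgQ'Q g → AlgEQ (g.comp f))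
    (halg_compEQE : ∀ (f : E →+ Q) (g : Q →+ E), AlgEQ f → AlgQE g → AlgEE (g.comp f))
    -- an algebraic map with finite image is zero
    (halg_fin : ∀ f : E →+ Q, AlgEQ f → (Set.range f).Finite → f = 0)
    -- existence of dual isogenies
    (halg_dual : ∀ f : E →+ Q, AlgEQ f → f ≠ 0 →
      ∃ fd : Q →+ E, AlgQE fd ∧ fd.comp f = Nat.card f.ker • AddMonoidHom.id E ∧
        f.comp fd = Nat.card f.ker • AddMonoidHom.id Q)
    -- `E` has no complex multiplication: `End(Ē) = ℤ`
    (hnonCM : ∀ f : E →+ E, AlgEE f → ∃ z : ℤ, f = z • AddMonoidHom.id E)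
    -- torsion and divisibility of elliptic curves over `k̄` (char 0)
    (htorsQ : ∀ m : ℕ, 0 < m → Nat.card (nTorsion m Q) = m ^ 2)
    -- the quotient isogenies `π : E → E/C` and `π' : E → E/C'`, defined over `k`
    (π : E →+ Q) (π' : E →+ Q')
    (hπalg : AlgEQ π) (hπ'alg : AlgEQ' π')
    (hπsurj : Function.Surjective π) (hπ'surj : Function.Surjective π')
    -- `C = ker π` and `C' = ker π'` are `k`-rational cyclic subgroups of order `d`
    (d : ℕ) (hd : 0 < d)
    (hCcard : Nat.card π.ker = d) (hC'card : Nat.card π'.ker = d)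
    -- an isomorphism of elliptic curves `E/C ≅ E/C'` over `k`
    (ι : Q ≃+ Q')
    (hιsymmalg : AlgQ'Q ι.symm.toAddMonoidHom) :
    π.ker = π'.ker := by
  set ψ : E →+ Q := ι.symm.toAddMonoidHom.comp π'
  have hψalg : AlgEQ ψ := halg_compEQ'Q π' _ hπ'alg hιsymmalg
  have hψker : ψ.ker = π'.ker := AddMonoidHom.ker_addEquiv_comp π' ι.symm
  have hπ : π ≠ 0 := by simpa using nsmul_ne_zero_of_surjective htorsQ hπsurj one_pos
  obtain ⟨π_dual, hπ_dual_alg, -, hπ_π_dual⟩ := halg_dual π hπalg hπ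
  obtain ⟨z, hz⟩ := hnonCM (π_dual.comp ψ) (halg_compEQE ψ π_dual hψalg hπ_dual_alg)
  have hψπ : d • ψ = z • π := calc
    d • ψ = (π.comp π_dual).comp ψ := by rw [hπ_π_dual, hCcard]; ext; simp
    _ = π.comp (π_dual.comp ψ) := rfl
    _ = z • π := by rw [hz]; ext; simp
  have hzd : z.natAbs = d := natAbs_eq_of_nsmul_eq_zsmul htorsQ (ι.symm.surjective.comp hπ'surj)
    hπsurj (by rw [hψker, hC'card, hCcard]) (by omega) hd hψπ
  rw [← hψker]
  rcases Int.natAbs_eq z with hz' | hz'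
  · have hsub : ψ - π = 0 := halg_fin _ (halg_sub ψ π hψalg hπalg) <|
      range_finite_of_nsmul_eq_zero htorsQ hd <| by
        rw [smul_sub, hψπ, hz', hzd, natCast_zsmul, sub_self]
    rw [sub_eq_zero.mp hsub]
  · have hadd : ψ + π = 0 := halg_fin _ (halg_add ψ π hψalg hπalg) <|
      range_finite_of_nsmul_eq_zero htorsQ hd <| by
        rw [smul_add, hψπ, hz', hzd, neg_smul, natCast_zsmul, neg_add_cancel]
    rw [eq_neg_of_add_eq_zero_left hadd]
    ext; simp

/-- Let `E` be an elliptic curve without complex multiplication over a field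
`k` of characteristic `0`, and let `C, C' ⊆ E` be `k`-rational cyclic subgroups of order `d`.
If the quotient elliptic curves `E/C` and `E/C'` are isomorphic over `k`, then `C = C'`.

Since Mathlib has no theory of isogenies, the setting is axiomatized faithfully:
`E`, `Q = E/C` and `Q' = E/C'` are given by their groups of `k̄`-points, acted on by the
absolute Galois group `Γ = Gal(k̄/k)`; predicates `Alg__` single out the group homomorphisms
induced by morphisms of the underlying elliptic curves over `k̄`, and the standard facts about
such morphisms (closure under sums and composition, surjectivity and finiteness of kernels of
nonzero ones, vanishing of those with finite image, existence of dual isogenies, `End(Ē) = ℤ`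
since `E` is non-CM, and the structure of torsion) are hypotheses.  `C = ker π` and
`C' = ker π'` are the kernels of the quotient isogenies, they are cyclic of order `d` and
Galois-stable (`k`-rational), and `ι : E/C ≃ E/C'` is an isomorphism of elliptic curves
defined over `k`.  The conclusion is `C = C'`. -/
theorem kernel_determines_quotient_of_nonCM
    (k : Type) [Field k] [CharZero k]
    (Γ : Type) [Group Γ]
    (E Q Q' : Type) [AddCommGroup E] [AddCommGroup Q] [AddCommGroup Q']
    (ρE : Γ →* Multiplicative (AddAut E)) (ρQ : Γ →* Multiplicative (AddAut Q))
    (ρQ' : Γ →* Multiplicative (AddAut Q'))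
    (AlgEE : (E →+ E) → Prop) (AlgEQ : (E →+ Q) → Prop) (AlgEQ' : (E →+ Q') → Prop)
    (AlgQE : (Q →+ E) → Prop) (AlgQQ' : (Q →+ Q') → Prop) (AlgQ'Q : (Q' →+ Q) → Prop)
    -- closure properties of algebraic maps
    (halg_sub : ∀ f g : E →+ Q, AlgEQ f → AlgEQ g → AlgEQ (f - g))
    (halg_add : ∀ f g : E →+ Q, AlgEQ f → AlgEQ g → AlgEQ (f + g))
    (halg_compEQ'Q : ∀ (f : E →+ Q') (g : Q' →+ Q), AlgEQ' f → AlgQ'Q g → AlgEQ (g.comp f))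
    (halg_compEQE : ∀ (f : E →+ Q) (g : Q →+ E), AlgEQ f → AlgQE g → AlgEE (g.comp f))
    -- a nonzero algebraic map of elliptic curves over `k̄` is an isogeny
    (halg_isog : ∀ f : E →+ Q, AlgEQ f → f ≠ 0 → Function.Surjective f ∧ Finite f.ker)
    -- an algebraic map with finite image is zero
    (halg_fin : ∀ f : E →+ Q, AlgEQ f → (Set.range f).Finite → f = 0)
    -- existence of dual isogenies
    (halg_dual : ∀ f : E →+ Q, AlgEQ f → f ≠ 0 →
      ∃ fd : Q →+ E, AlgQE fd ∧ fd.comp f = Nat.card f.ker • AddMonoidHom.id E ∧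
        f.comp fd = Nat.card f.ker • AddMonoidHom.id Q)
    -- `E` has no complex multiplication: `End(Ē) = ℤ`
    (hnonCM : ∀ f : E →+ E, AlgEE f → ∃ z : ℤ, f = z • AddMonoidHom.id E)
    -- torsion and divisibility of elliptic curves over `k̄` (char 0)
    (htorsE : ∀ m : ℕ, 0 < m → Nat.card (nTorsion m E) = m ^ 2)
    (htorsQ : ∀ m : ℕ, 0 < m → Nat.card (nTorsion m Q) = m ^ 2)
    (hdivE : ∀ m : ℕ, 0 < m → Function.Surjective fun x : E => m • x)
    (hdivQ : ∀ m : ℕ, 0 < m → Function.Surjective fun x : Q => m • x)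
    -- the quotient isogenies `π : E → E/C` and `π' : E → E/C'`, defined over `k`
    (π : E →+ Q) (π' : E →+ Q')
    (hπalg : AlgEQ π) (hπ'alg : AlgEQ' π')
    (hπsurj : Function.Surjective π) (hπ'surj : Function.Surjective π')
    (hπgal : ∀ (σ : Γ) (x : E), π (ρE σ x) = ρQ σ (π x))
    (hπ'gal : ∀ (σ : Γ) (x : E), π' (ρE σ x) = ρQ' σ (π' x))
    -- `C = ker π` and `C' = ker π'` are `k`-rational cyclic subgroups of order `d`
    (d : ℕ) (hd : 0 < d)
    (hCcyc : IsAddCyclic π.ker) (hC'cyc : IsAddCyclic π'.ker)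
    (hCcard : Nat.card π.ker = d) (hC'card : Nat.card π'.ker = d)
    (hCgal : ∀ σ : Γ, ∀ x ∈ π.ker, ρE σ x ∈ π.ker)
    (hC'gal : ∀ σ : Γ, ∀ x ∈ π'.ker, ρE σ x ∈ π'.ker)
    -- an isomorphism of elliptic curves `E/C ≅ E/C'` over `k`
    (ι : Q ≃+ Q')
    (hιalg : AlgQQ' ι.toAddMonoidHom) (hιsymmalg : AlgQ'Q ι.symm.toAddMonoidHom)
    (hιgal : ∀ (σ : Γ) (x : Q), ι (ρQ σ x) = ρQ' σ (ι x)) :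
    π.ker = π'.ker :=
  kernel_determines_quotient_of_nonCM_general E Q Q' AlgEE AlgEQ AlgEQ' AlgQE AlgQ'Q halg_sub
    halg_add halg_compEQ'Q halg_compEQE halg_fin halg_dual hnonCM htorsQ π π' hπalg hπ'alg hπsurj
    hπ'surj d hd hCcard hC'card ι hιsymmalg
end

section
/- Let G be a finite subgroup of GL_2(ℝ) such that the trace and determinant of every element of G are rational numbers. Then G is isomorphic to a cyclic group of order 1, 2, 3, 4, or 6, or to a dihedral group of order 4, 6, 8, or 12. Moreover, if G is isomorphic to a dihedral group of order 4, 8, or 12, then the matrix -I belongs to G. -/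
/-!
Averaging `gᵀ g` over a finite `G ≤ GL₂(ℝ)` gives an invariant inner product, so after conjugation
`G ≤ O(2)`. Its rotations `G ∩ SO(2)` embed into the unit circle of `ℂ`, hence form a cyclic group
generated by a root of unity `z` with `z + z⁻¹ = tr` rational; being also an algebraic integer of
absolute value at most `2`, `z + z⁻¹` is one of `0, ±1, ±2`, which forces `z⁴ = 1` or `z⁶ = 1`. A
reflection in `G` makes `G` dihedral over its rotations. Finally, in a dihedral group of order
`2n` with `n` even, the central rotation `r (n / 2)` is the product of two reflections, so one of
these three involutions has determinant `1`, and the only such involution in `GL₂` is `-1`.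
-/

open Matrix

namespace Complex

theorem exists_int_add_inv_eq_of_re_eq_ratCast {z : ℂ} (hz : IsOfFinOrder z)
    (hre : ∃ q : ℚ, z.re = q) : ∃ k : ℤ, |k| ≤ 2 ∧ z + z⁻¹ = k := by
  obtain ⟨q, hq⟩ := hre
  have hpos := hz.orderOf_pos
  have hpow : z ^ orderOf z = 1 := pow_orderOf_eq_one z
  have hnorm : ‖z‖ = 1 := norm_eq_one_of_pow_eq_one hpow hpos.ne'
  have hint : IsIntegral ℤ (z + z⁻¹) :=
    (IsIntegral.of_pow hpos (hpow ▸ isIntegral_one)).add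
      (IsIntegral.of_pow hpos (by rw [inv_pow, hpow, inv_one]; exact isIntegral_one))
  have hsum : z + z⁻¹ = (2 * z.re : ℝ) := by rw [inv_eq_conj hnorm, add_conj]
  obtain ⟨k, hk⟩ := hint.exists_int_iff_exists_rat.1 ⟨2 * q, by rw [hsum, hq]; push_cast; ring⟩
  refine ⟨k, ?_, hk⟩
  have hkre : (k : ℝ) = 2 * z.re := by exact_mod_cast hk.symm.trans hsum
  have : |(k : ℝ)| ≤ 2 := by
    rw [hkre, abs_mul, abs_two]
    linarith [abs_re_le_norm z]
  exact_mod_cast this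

theorem orderOf_mem_of_re_eq_ratCast {z : ℂ} (hz : IsOfFinOrder z) (hre : ∃ q : ℚ, z.re = q) :
    orderOf z ∈ ({1, 2, 3, 4, 6} : Set ℕ) := by
  obtain ⟨k, hk2, hk⟩ := exists_int_add_inv_eq_of_re_eq_ratCast hz hre
  have hquad : z ^ 2 - k * z + 1 = 0 := by
    rw [← hk]
    field_simp [hz.isUnit.ne_zero]
    ring
  have h46 : z ^ 4 = 1 ∨ z ^ 6 = 1 := by
    obtain ⟨hlo, hhi⟩ := abs_le.1 hk2
    interval_cases k <;> push_cast at hquad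
    · have : (z + 1) ^ 2 = 0 := by linear_combination hquad
      rw [eq_neg_of_add_eq_zero_left (pow_eq_zero_iff two_ne_zero |>.1 this)]
      norm_num
    · right; linear_combination (z - 1) * (z ^ 3 + 1) * hquad
    · left; linear_combination (z ^ 2 - 1) * hquad
    · right; linear_combination (z + 1) * (z ^ 3 - 1) * hquad
    · have : (z - 1) ^ 2 = 0 := by linear_combination hquad
      rw [sub_eq_zero.1 (pow_eq_zero_iff two_ne_zero |>.1 this)]
      norm_num
  have hdvd : orderOf z ∣ 4 ∨ orderOf z ∣ 6 :=
    h46.imp orderOf_dvd_of_pow_eq_one orderOf_dvd_of_pow_eq_one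
  have hle : orderOf z ≤ 6 := by
    rcases hdvd with h | h <;> linarith [Nat.le_of_dvd (by norm_num) h]
  interval_cases orderOf z <;> simp_all

end Complex

namespace DihedralGroup

theorem orderOf_r_half {n : ℕ} (hn : Even n) (hn0 : n ≠ 0) :
    orderOf (r ((n / 2 : ℕ) : ZMod n)) = 2 := by
  obtain ⟨m, rfl⟩ := hn
  rw [orderOf_eq_prime_iff, r_pow, one_def, Ne, r.injEq, r.injEq, ← Nat.cast_mul,
    ZMod.natCast_eq_zero_iff, ZMod.natCast_eq_zero_iff]
  refine ⟨⟨1, by omega⟩, fun h ↦ ?_⟩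
  have := Nat.le_of_dvd (by omega) h
  omega

variable {G : Type*} [Group G] {n : ℕ} [NeZero n] {r s : G}

def lift (hr : r ^ n = 1) (hs : s * s = 1) (hsr : s * r * s = r⁻¹) : DihedralGroup n →* G where
  toFun
    | .r i => r ^ i.val
    | .sr i => s * r ^ i.val
  map_one' := show r ^ (0 : ZMod n).val = 1 by simp
  map_mul' := by
    have hadd (i j : ZMod n) : r ^ (i + j).val = r ^ i.val * r ^ j.val := by
      rw [← pow_add, ZMod.val_add, ← pow_eq_pow_mod _ hr]
    have hneg (i : ZMod n) : r ^ (-i).val = (r ^ i.val)⁻¹ := by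
      rw [eq_inv_iff_mul_eq_one, ← hadd, neg_add_cancel, ZMod.val_zero, pow_zero]
    have hswap (k : ℕ) : r ^ k * s = s * (r ^ k)⁻¹ := by
      have hconj : s * r ^ k * s = (r ^ k)⁻¹ := by
        have := conj_pow (a := s) (b := r) (i := k)
        rwa [inv_eq_of_mul_eq_one_right hs, hsr, inv_pow, eq_comm] at this
      rw [← hconj, ← mul_assoc, ← mul_assoc, hs, one_mul]
    rintro (i | i) (j | j)
    · exact hadd i j
    · show s * r ^ (j - i).val = r ^ i.val * (s * r ^ j.val)
      rw [← mul_assoc, hswap, mul_assoc, ← hneg, ← hadd, neg_add_eq_sub]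
    · show s * r ^ (i + j).val = s * r ^ i.val * r ^ j.val
      rw [hadd, mul_assoc]
    · show r ^ (j - i).val = s * r ^ i.val * (s * r ^ j.val)
      rw [← mul_assoc, mul_assoc s, hswap, ← mul_assoc, hs, one_mul, ← hneg, ← hadd,
        neg_add_eq_sub]

end DihedralGroup

theorem nonempty_mulEquiv_dihedralGroup {G : Type*} [Group G] {n : ℕ} [NeZero n] {r s : G}
    (hr : orderOf r = n) (hs : s * s = 1) (hsr : s * r * s = r⁻¹)
    (hs_notMem : s ∉ Subgroup.zpowers r) (hcard : Nat.card G = 2 * n) :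
    Nonempty (G ≃* DihedralGroup n) := by
  have : Finite G := Nat.finite_of_card_ne_zero (by simp [hcard, NeZero.ne n])
  have hrn : r ^ n = 1 := hr ▸ pow_orderOf_eq_one r
  set f := DihedralGroup.lift hrn hs hsr
  have hf : Function.Injective f := by
    rw [injective_iff_map_eq_one]
    rintro (i | i) h
    · have hdvd := orderOf_dvd_of_pow_eq_one (show r ^ i.val = 1 from h)
      rw [hr] at hdvd
      rw [(ZMod.val_eq_zero i).1 (Nat.eq_zero_of_dvd_of_lt hdvd (ZMod.val_lt i)),
        DihedralGroup.r_zero]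
    · have hsr' : s = (r ^ i.val)⁻¹ := eq_inv_of_mul_eq_one_left (a := s) h
      exact absurd (hsr' ▸ inv_mem (Subgroup.npow_mem_zpowers r i.val)) hs_notMem
  exact ⟨(MulEquiv.ofBijective f
    (hf.bijective_of_nat_card_le (by rw [hcard, DihedralGroup.nat_card]))).symm⟩

namespace Matrix

theorem adjugate_eq_det_smul_of_mul_eq_one {n R : Type*} [Fintype n] [DecidableEq n] [CommRing R]
    {A B : Matrix n n R} (h : B * A = 1) : adjugate A = A.det • B := by
  rw [← one_mul (adjugate A), ← h, mul_assoc, mul_adjugate, mul_smul_comm, mul_one]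

end Matrix

namespace Matrix.GeneralLinearGroup

variable (n : Type*) [Fintype n] [DecidableEq n] (R : Type*) [CommRing R]

def orthogonal : Subgroup (GL n R) where
  carrier := {x | (x : Matrix n n R)ᵀ * x = 1}
  mul_mem' {x y} hx hy := by
    simp only [Set.mem_ofPred_eq, Units.val_mul, transpose_mul] at *
    rw [mul_assoc, ← mul_assoc (x : Matrix n n R)ᵀ, hx, one_mul, hy]
  one_mem' := by simp
  inv_mem' {x} hx := by
    have hinv : ((x⁻¹ : GL n R) : Matrix n n R) = (x : Matrix n n R)ᵀ :=
      Units.inv_eq_of_mul_eq_one_left hx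
    simp only [Set.mem_ofPred_eq, hinv, transpose_transpose]
    exact mul_eq_one_comm.1 hx

def specialOrthogonal : Subgroup (GL n R) := orthogonal n R ⊓ det.ker

variable {n R}

lemma mem_orthogonal {x : GL n R} : x ∈ orthogonal n R ↔ (x : Matrix n n R)ᵀ * x = 1 := Iff.rfl

lemma mem_specialOrthogonal {x : GL n R} :
    x ∈ specialOrthogonal n R ↔ x ∈ orthogonal n R ∧ (x : Matrix n n R).det = 1 := by
  simp [specialOrthogonal, Units.ext_iff]

open scoped MatrixOrder in
/-- The conjugating matrix is a factor `B` of the positive definite, `G`-invariant form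
`∑ g, gᵀ g = Bᵀ B`. -/
theorem exists_map_conj_le_orthogonal (G : Subgroup (GL n ℝ)) [Finite G] :
    ∃ P : GL n ℝ, G.map (MulAut.conj P).toMonoidHom ≤ orthogonal n ℝ := by
  have := Fintype.ofFinite G
  set S : Matrix n n ℝ := ∑ g : G, ((g : GL n ℝ) : Matrix n n ℝ)ᴴ * (g : GL n ℝ) with hS
  have hSpos : S.PosDef := by
    rw [hS, ← Finset.add_sum_erase _ _ (Finset.mem_univ 1)]
    refine PosDef.add_posSemidef ?_ (posSemidef_sum _ fun g _ ↦ posSemidef_conjTranspose_mul_self _)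
    simpa using PosDef.one
  have hSinv : ∀ h ∈ G, ((h : Matrix n n ℝ))ᵀ * S * h = S := by
    intro h hh
    rw [hS, Finset.mul_sum, Finset.sum_mul]
    refine Fintype.sum_equiv (Equiv.mulRight ⟨h, hh⟩) _ _ fun g ↦ ?_
    simp [conjTranspose_eq_transpose_of_trivial, mul_assoc]
  obtain ⟨B, hB, hSB⟩ := CStarAlgebra.isStrictlyPositive_iff_eq_star_mul_self.mp
    hSpos.isStrictlyPositive
  have hBB : Bᵀ * B = S := by
    rw [hSB, star_eq_conjTranspose, conjTranspose_eq_transpose_of_trivial]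
  refine ⟨hB.unit, ?_⟩
  rintro _ ⟨g, hg, rfl⟩
  set C := ((hB.unit⁻¹ : GL n ℝ) : Matrix n n ℝ)
  rw [mem_orthogonal]
  simp only [MulEquiv.toMonoidHom_eq_coe, MonoidHom.coe_coe, MulAut.conj_apply, Units.val_mul,
    hB.unit_spec]
  calc (B * (g : Matrix n n ℝ) * C)ᵀ * (B * g * C)
      = Cᵀ * ((g : Matrix n n ℝ)ᵀ * (Bᵀ * B) * g) * C := by simp only [transpose_mul, mul_assoc]
    _ = (B * C)ᵀ * (B * C) := by rw [hBB, hSinv g hg, ← hBB]; simp only [transpose_mul, mul_assoc]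
    _ = 1 := by rw [hB.mul_val_inv, transpose_one, one_mul]

section IsDomain

variable [IsDomain R]

lemma det_eq_one_or_neg_one {x : GL n R} (hx : x ∈ orthogonal n R) :
    (x : Matrix n n R).det = 1 ∨ (x : Matrix n n R).det = -1 := by
  rw [← mul_self_eq_one_iff]
  nth_rw 1 [← det_transpose]
  rw [← det_mul, hx, det_one]

lemma det_eq_neg_one_of_notMem_specialOrthogonal {x : GL n R}
    (hx : x ∈ orthogonal n R) (hx' : x ∉ specialOrthogonal n R) :
    (x : Matrix n n R).det = -1 :=
  (det_eq_one_or_neg_one hx).resolve_left fun h ↦ hx' (mem_specialOrthogonal.2 ⟨hx, h⟩)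

theorem card_eq_two_mul_card_inf_specialOrthogonal {H : Subgroup (GL n R)}
    (hH : H ≤ orthogonal n R) {s : GL n R} (hsH : s ∈ H) (hs : s ∉ specialOrthogonal n R) :
    Nat.card H = 2 * Nat.card ↥(H ⊓ specialOrthogonal n R) := by
  have hsdet := det_eq_neg_one_of_notMem_specialOrthogonal (hH hsH) hs
  have hne : (-1 : R) ≠ 1 := fun h ↦ hs (mem_specialOrthogonal.2 ⟨hH hsH, hsdet.trans h⟩)
  have hindex : (specialOrthogonal n R).relIndex H = 2 := by
    refine Subgroup.relIndex_eq_two_iff.2 ⟨s, hsH, fun b hb ↦ ?_⟩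
    simp only [mem_specialOrthogonal, hH (mul_mem hb hsH), hH hb, true_and, Units.val_mul,
      det_mul, hsdet]
    rcases det_eq_one_or_neg_one (hH hb) with h | h <;> simp [h, hne]
  rw [← Subgroup.relIndex_bot_left, ← Subgroup.relIndex_mul_relIndex _ _ _ bot_le inf_le_left,
    Subgroup.relIndex_bot_left, Subgroup.inf_relIndex_left, hindex, mul_comm]

end IsDomain

lemma mul_self_eq_one_of_det_eq_neg_one {x : GL (Fin 2) R} (hx : x ∈ orthogonal (Fin 2) R)
    (hd : (x : Matrix (Fin 2) (Fin 2) R).det = -1) : x * x = 1 := by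
  have h01 := congrFun₂ (adjugate_eq_det_smul_of_mul_eq_one hx) 0 1
  simp only [adjugate_fin_two, hd] at h01
  have hsymm : (x : Matrix (Fin 2) (Fin 2) R)ᵀ = x := by
    ext i j
    fin_cases i <;> fin_cases j <;> simp_all
  ext1
  rw [Units.val_mul, Units.val_one, ← mem_orthogonal.1 hx, hsymm]

lemma entries_of_mem_specialOrthogonal {x : GL (Fin 2) R}
    (hx : x ∈ specialOrthogonal (Fin 2) R) :
    (x : Matrix (Fin 2) (Fin 2) R) 1 1 = x 0 0 ∧ (x : Matrix (Fin 2) (Fin 2) R) 0 1 = -x 1 0 := by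
  obtain ⟨hx, hd⟩ := mem_specialOrthogonal.1 hx
  have h := adjugate_eq_det_smul_of_mul_eq_one hx
  rw [hd, one_smul, adjugate_fin_two] at h
  have h00 := congrFun₂ h 0 0
  have h10 := congrFun₂ h 1 0
  simp only [Fin.isValue, of_apply, cons_val', cons_val_zero, cons_val_fin_one, transpose_apply,
    cons_val_one] at h00 h10
  exact ⟨h00, h10.symm⟩

def specialOrthogonalToComplex : specialOrthogonal (Fin 2) ℝ →* ℂ where
  toFun x := ⟨((x : GL (Fin 2) ℝ) : Matrix (Fin 2) (Fin 2) ℝ) 0 0,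
    ((x : GL (Fin 2) ℝ) : Matrix (Fin 2) (Fin 2) ℝ) 1 0⟩
  map_one' := by simp [Complex.ext_iff]
  map_mul' x y := by
    obtain ⟨hx11, hx01⟩ := entries_of_mem_specialOrthogonal x.2
    apply Complex.ext <;> simp [mul_apply, Fin.sum_univ_two, hx11, hx01] <;> ring

lemma specialOrthogonalToComplex_injective : Function.Injective specialOrthogonalToComplex := by
  intro x y h
  obtain ⟨hx11, hx01⟩ := entries_of_mem_specialOrthogonal x.2
  obtain ⟨hy11, hy01⟩ := entries_of_mem_specialOrthogonal y.2
  obtain ⟨h00, h10⟩ := Complex.ext_iff.1 h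
  simp only [specialOrthogonalToComplex, MonoidHom.coe_mk, OneHom.coe_mk] at h00 h10
  ext i j
  fin_cases i <;> fin_cases j <;> simp_all

lemma two_mul_re_specialOrthogonalToComplex (x : specialOrthogonal (Fin 2) ℝ) :
    2 * (specialOrthogonalToComplex x).re =
      trace ((x : GL (Fin 2) ℝ) : Matrix (Fin 2) (Fin 2) ℝ) := by
  simp [specialOrthogonalToComplex, trace_fin_two, (entries_of_mem_specialOrthogonal x.2).1]
  ring

section FiniteRotationGroup

variable {K : Subgroup (GL (Fin 2) ℝ)} [Finite K] (hK : K ≤ specialOrthogonal (Fin 2) ℝ)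
include hK

theorem isCyclic_of_le_specialOrthogonal : IsCyclic K :=
  isCyclic_of_injective_ringHom (specialOrthogonalToComplex.comp (Subgroup.inclusion hK))
    (specialOrthogonalToComplex_injective.comp (Subgroup.inclusion_injective hK))

theorem orderOf_mem_of_le_specialOrthogonal (x : K)
    (htr : ∃ q : ℚ, trace ((x : GL (Fin 2) ℝ) : Matrix (Fin 2) (Fin 2) ℝ) = q) :
    orderOf x ∈ ({1, 2, 3, 4, 6} : Set ℕ) := by
  obtain ⟨q, hq⟩ := htr
  rw [← orderOf_injective (specialOrthogonalToComplex.comp (Subgroup.inclusion hK))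
    (specialOrthogonalToComplex_injective.comp (Subgroup.inclusion_injective hK)) x]
  refine Complex.orderOf_mem_of_re_eq_ratCast
    (MonoidHom.isOfFinOrder _ (isOfFinOrder_of_finite x)) ⟨q / 2, ?_⟩
  have := two_mul_re_specialOrthogonalToComplex (Subgroup.inclusion hK x)
  rw [Subgroup.coe_inclusion, hq] at this
  rw [MonoidHom.comp_apply]
  push_cast
  linarith

theorem card_mem_of_le_specialOrthogonal
    (htr : ∀ x ∈ K, ∃ q : ℚ, trace (x : Matrix (Fin 2) (Fin 2) ℝ) = q) :
    Nat.card K ∈ ({1, 2, 3, 4, 6} : Set ℕ) := by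
  obtain ⟨g, hg⟩ := (isCyclic_of_le_specialOrthogonal hK).exists_generator
  rw [← orderOf_eq_card_of_forall_mem_zpowers hg]
  exact orderOf_mem_of_le_specialOrthogonal hK g (htr g g.2)

end FiniteRotationGroup

theorem exists_mulEquiv_zmod_or_dihedralGroup_of_le_orthogonal (H : Subgroup (GL (Fin 2) ℝ))
    [Finite H] (hH : H ≤ orthogonal (Fin 2) ℝ)
    (htr : ∀ x ∈ H, ∃ q : ℚ, trace (x : Matrix (Fin 2) (Fin 2) ℝ) = q) :
    (∃ n ∈ ({1, 2, 3, 4, 6} : Set ℕ), Nonempty (H ≃* Multiplicative (ZMod n))) ∨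
      (∃ n ∈ ({2, 3, 4, 6} : Set ℕ), Nonempty (H ≃* DihedralGroup n)) := by
  by_cases hSO : H ≤ specialOrthogonal (Fin 2) ℝ
  · have := isCyclic_of_le_specialOrthogonal hSO
    exact .inl ⟨_, card_mem_of_le_specialOrthogonal hSO htr, ⟨(zmodCyclicMulEquiv this).symm⟩⟩
  obtain ⟨s, hsH, hsSO⟩ := SetLike.not_le_iff_exists.1 hSO
  have hsdet := det_eq_neg_one_of_notMem_specialOrthogonal (hH hsH) hsSO
  set K := H ⊓ specialOrthogonal (Fin 2) ℝ
  have hKSO : K ≤ specialOrthogonal (Fin 2) ℝ := inf_le_right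
  have : Finite K := Finite.of_injective _ (Subgroup.inclusion_injective inf_le_left)
  have hcard := card_eq_two_mul_card_inf_specialOrthogonal hH hsH hsSO
  have hKcard := card_mem_of_le_specialOrthogonal hKSO fun x hx ↦ htr x hx.1
  by_cases hK1 : Nat.card K = 1
  · rw [hK1, mul_one] at hcard
    have := isCyclic_of_prime_card (p := 2) hcard
    exact .inl ⟨_, by simp [hcard], ⟨(zmodCyclicMulEquiv this).symm⟩⟩
  have : NeZero (Nat.card K) := ⟨Nat.card_pos.ne'⟩
  have hKmem : Nat.card K ∈ ({2, 3, 4, 6} : Set ℕ) := by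
    simp only [Set.mem_insert_iff, Set.mem_singleton_iff] at hKcard ⊢
    omega
  obtain ⟨g, hg⟩ := (isCyclic_of_le_specialOrthogonal hKSO).exists_generator
  refine .inr ⟨Nat.card K, hKmem, nonempty_mulEquiv_dihedralGroup (r := ⟨g, g.2.1⟩)
    (s := ⟨s, hsH⟩) ?_ ?_ ?_ ?_ hcard⟩
  · rw [Subgroup.orderOf_mk, Subgroup.orderOf_coe, orderOf_eq_card_of_forall_mem_zpowers hg]
  · exact Subtype.ext (mul_self_eq_one_of_det_eq_neg_one (hH hsH) hsdet)
  · have hsg := mul_self_eq_one_of_det_eq_neg_one (hH (mul_mem hsH g.2.1))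
      (by rw [Units.val_mul, det_mul, hsdet, (mem_specialOrthogonal.1 g.2.2).2, mul_one])
    exact Subtype.ext (eq_inv_of_mul_eq_one_left (by simpa [mul_assoc] using hsg))
  · rintro ⟨k, hk⟩
    apply hsSO
    have : (g : GL (Fin 2) ℝ) ^ k = s := congrArg Subtype.val hk
    exact this ▸ hKSO (zpow_mem g.2 k)

section Involution

variable {R : Type*} [CommRing R] [IsDomain R] [NeZero (2 : R)]

theorem eq_neg_one_of_orderOf_eq_two_of_det_eq_one {x : GL (Fin 2) R} (hx : orderOf x = 2)
    (hd : (x : Matrix (Fin 2) (Fin 2) R).det = 1) : x = -1 := by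
  have hxx : (x : Matrix (Fin 2) (Fin 2) R) * x = 1 := by
    rw [← Units.val_mul, ← sq, (orderOf_eq_prime_iff.1 hx).1, Units.val_one]
  have hadj := adjugate_eq_det_smul_of_mul_eq_one hxx
  rw [hd, one_smul, adjugate_fin_two] at hadj
  have h2 : ∀ a : R, -a = a → a = 0 := fun a h ↦
    (mul_eq_zero.1 (by linear_combination -h : (2 : R) * a = 0)).resolve_left two_ne_zero
  have h00 : (x : Matrix (Fin 2) (Fin 2) R) 1 1 = x 0 0 := by simpa using congrFun₂ hadj 0 0
  have h01 : (x : Matrix (Fin 2) (Fin 2) R) 0 1 = 0 := h2 _ (by simpa using congrFun₂ hadj 0 1)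
  have h10 : (x : Matrix (Fin 2) (Fin 2) R) 1 0 = 0 := h2 _ (by simpa using congrFun₂ hadj 1 0)
  rw [det_fin_two, h00, h01, h10, mul_zero, sub_zero] at hd
  rcases mul_self_eq_one_iff.1 hd with h | h
  · have : x = 1 := by
      ext i j
      fin_cases i <;> fin_cases j <;> simp [h, h00, h01, h10]
    simp [this] at hx
  · ext i j
    fin_cases i <;> fin_cases j <;> simp [h, h00, h01, h10]

theorem neg_one_mem_of_orderOf_eq_two {G : Subgroup (GL (Fin 2) R)} {a b : GL (Fin 2) R}
    (ha : a ∈ G) (hb : b ∈ G) (ha2 : orderOf a = 2) (hb2 : orderOf b = 2)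
    (hab2 : orderOf (a * b) = 2) : -1 ∈ G := by
  have hdet : ∀ {x : GL (Fin 2) R}, orderOf x = 2 →
      (x : Matrix (Fin 2) (Fin 2) R).det = 1 ∨ (x : Matrix (Fin 2) (Fin 2) R).det = -1 := by
    intro x hx
    rw [← mul_self_eq_one_iff, ← det_mul, ← Units.val_mul, ← sq, (orderOf_eq_prime_iff.1 hx).1,
      Units.val_one, det_one]
  rcases hdet ha2 with hda | hda
  · exact eq_neg_one_of_orderOf_eq_two_of_det_eq_one ha2 hda ▸ ha
  rcases hdet hb2 with hdb | hdb
  · exact eq_neg_one_of_orderOf_eq_two_of_det_eq_one hb2 hdb ▸ hb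
  have hdab : ((a * b : GL (Fin 2) R) : Matrix (Fin 2) (Fin 2) R).det = 1 := by
    rw [Units.val_mul, det_mul, hda, hdb, neg_one_mul, neg_neg]
  exact eq_neg_one_of_orderOf_eq_two_of_det_eq_one hab2 hdab ▸ mul_mem ha hb

theorem neg_one_mem_of_mulEquiv_dihedralGroup {G : Subgroup (GL (Fin 2) R)} {n : ℕ}
    (hn : Even n) (hn0 : n ≠ 0) (f : G ≃* DihedralGroup n) : -1 ∈ G := by
  have hord : ∀ y, orderOf y = 2 → orderOf (f.symm y : GL (Fin 2) R) = 2 := fun y hy ↦ by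
    rw [Subgroup.orderOf_coe, MulEquiv.orderOf_eq, hy]
  refine neg_one_mem_of_orderOf_eq_two (f.symm (.sr 0)).2 (f.symm (.sr (n / 2 : ℕ))).2
    (hord _ (DihedralGroup.orderOf_sr _)) (hord _ (DihedralGroup.orderOf_sr _)) ?_
  rw [← Subgroup.coe_mul, ← map_mul, DihedralGroup.sr_mul_sr, sub_zero]
  exact hord _ (DihedralGroup.orderOf_r_half hn hn0)

end Involution

end Matrix.GeneralLinearGroup

theorem finite_subgroup_GL2R_classification_general
    (G : Subgroup (Matrix.GeneralLinearGroup (Fin 2) ℝ)) (hG : Finite G)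
    (htr : ∀ x ∈ G, ∃ q : ℚ, Matrix.trace (x : Matrix (Fin 2) (Fin 2) ℝ) = (q : ℝ)) :
    ((∃ n ∈ ({1, 2, 3, 4, 6} : Set ℕ), Nonempty (G ≃* Multiplicative (ZMod n))) ∨
      (∃ n ∈ ({2, 3, 4, 6} : Set ℕ), Nonempty (G ≃* DihedralGroup n))) ∧
    (∀ n ∈ ({2, 4, 6} : Set ℕ), Nonempty (G ≃* DihedralGroup n) →
      (-1 : Matrix.GeneralLinearGroup (Fin 2) ℝ) ∈ G) := by
  obtain ⟨P, hP⟩ := GeneralLinearGroup.exists_map_conj_le_orthogonal G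
  set H := G.map (MulAut.conj P).toMonoidHom
  have e : G ≃* H := G.equivMapOfInjective _ (MulAut.conj P).injective
  have : Finite H := .of_equiv _ e.toEquiv
  have htrH : ∀ x ∈ H, ∃ q : ℚ, trace (x : Matrix (Fin 2) (Fin 2) ℝ) = q := by
    rintro _ ⟨y, hy, rfl⟩
    simpa [trace_conj P.isUnit] using htr y hy
  refine ⟨?_, fun n hn ⟨f⟩ ↦ GeneralLinearGroup.neg_one_mem_of_mulEquiv_dihedralGroup ?_ ?_ f⟩
  · rcases GeneralLinearGroup.exists_mulEquiv_zmod_or_dihedralGroup_of_le_orthogonal H hP htrH with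
      ⟨n, hn, ⟨f⟩⟩ | ⟨n, hn, ⟨f⟩⟩
    exacts [.inl ⟨n, hn, ⟨e.trans f⟩⟩, .inr ⟨n, hn, ⟨e.trans f⟩⟩]
  all_goals rcases hn with rfl | rfl | rfl <;> decide

/-- Let `G` be a finite subgroup of `GL₂(ℝ)` such that the trace and determinant
of every element of `G` are rational.  Then `G` is isomorphic to a cyclic group of order
`1, 2, 3, 4` or `6`, or to a dihedral group of order `4, 6, 8` or `12` (i.e. `DihedralGroup n`
with `n ∈ {2, 3, 4, 6}`, where `DihedralGroup 2` is the Klein four group).  Moreover, if `G` is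
isomorphic to a dihedral group of order `4, 8` or `12`, then `-I ∈ G`. -/
theorem finite_subgroup_GL2R_classification
    (G : Subgroup (Matrix.GeneralLinearGroup (Fin 2) ℝ)) (hG : Finite G)
    (htr : ∀ x ∈ G, ∃ q : ℚ, Matrix.trace (x : Matrix (Fin 2) (Fin 2) ℝ) = (q : ℝ))
    (hdet : ∀ x ∈ G, ∃ q : ℚ, (x : Matrix (Fin 2) (Fin 2) ℝ).det = (q : ℝ)) :
    ((∃ n ∈ ({1, 2, 3, 4, 6} : Set ℕ), Nonempty (G ≃* Multiplicative (ZMod n))) ∨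
      (∃ n ∈ ({2, 3, 4, 6} : Set ℕ), Nonempty (G ≃* DihedralGroup n))) ∧
    (∀ n ∈ ({2, 4, 6} : Set ℕ), Nonempty (G ≃* DihedralGroup n) →
      (-1 : Matrix.GeneralLinearGroup (Fin 2) ℝ) ∈ G) :=
  finite_subgroup_GL2R_classification_general G hG htr
end

section
/- Every element x of a finite subgroup G of GL_2(ℝ) with rational trace and determinant has order 1, 2, 3, 4, or 6, and its characteristic polynomial is one of (T-1)^2, (T+1)^2, T^2-1, T^2+1, T^2+T+1, T^2-T+1. -/
/-!
An element of finite order `n` has complex eigenvalues `a, b` with `aⁿ = bⁿ = 1`. Its trace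
`a + b` is then an algebraic integer, hence an integer when rational, and `|a + b| ≤ 2`; its
determinant `ab` is real of modulus one, and `ab = -1` forces `b = -conj a`, i.e. trace zero.
This leaves six characteristic polynomials `X² - tX + d`. By Cayley–Hamilton, four of them
bound the order since they divide `X^k - 1` for `k = 2, 4, 3, 6`; the other two, `(X ∓ 1)²`,
force `x = ±1`, because a unipotent element of finite order in characteristic zero is trivial.
-/

open Polynomial

theorem eq_one_of_sq_sub_one_eq_zero_of_pow_eq_one {R : Type*} [Ring R] [Algebra ℚ R] {a : R}
    (ha : (a - 1) ^ 2 = 0) {n : ℕ} (hn : n ≠ 0) (han : a ^ n = 1) : a = 1 := by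
  set N := a - 1
  have hpow (k : ℕ) : a ^ k = 1 + k • N := by
    induction k with
    | zero => simp
    | succ k ih =>
      calc a ^ (k + 1) = (1 + k • N) * (1 + N) := by rw [pow_succ, ih]; simp [N]
        _ = 1 + (k • N + N) + k • N ^ 2 := by noncomm_ring
        _ = 1 + (k + 1) • N := by rw [ha, smul_zero, add_zero, succ_nsmul]
  rw [hpow, add_eq_left, ← Nat.cast_smul_eq_nsmul ℚ, smul_eq_zero, Nat.cast_eq_zero] at han
  exact sub_eq_zero.1 (han.resolve_left hn)

theorem isIntegral_of_pow_eq_one {R A : Type*} [CommRing R] [Ring A] [Algebra R A] {x : A}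
    {n : ℕ} (hn : n ≠ 0) (hx : x ^ n = 1) : IsIntegral R x :=
  .of_pow (Nat.pos_of_ne_zero hn) (hx ▸ isIntegral_one)

theorem Rat.exists_int_eq_of_isIntegral {A : Type*} [DivisionRing A] [CharZero A] {q : ℚ}
    (h : IsIntegral ℤ (q : A)) : ∃ z : ℤ, q = z := by
  rw [← eq_ratCast (algebraMap ℚ A), isIntegral_algebraMap_iff (algebraMap ℚ A).injective,
    IsIntegrallyClosed.isIntegral_iff] at h
  obtain ⟨z, hz⟩ := h
  exact ⟨z, by simp [← hz]⟩

theorem Complex.re_add_eq_zero_of_mul_eq_neg_one {a b : ℂ} (ha : ‖a‖ = 1) (hab : a * b = -1) :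
    (a + b).re = 0 := by
  have ha0 : a ≠ 0 := by rintro rfl; simp at ha
  have hinv : a⁻¹ = (starRingEnd ℂ) a := by
    rw [Complex.inv_def, Complex.normSq_eq_norm_sq, ha]; simp
  have hb : b = -(starRingEnd ℂ) a := by
    rw [← hinv, eq_neg_iff_add_eq_zero]; field_simp; linear_combination hab
  simp [hb]

theorem exists_int_of_sum_prod_roots_of_unity {n : ℕ} (hn : n ≠ 0) {a b : ℂ} (ha : a ^ n = 1)
    (hb : b ^ n = 1) {t d : ℝ} (ht : (t : ℂ) = a + b) (hd : (d : ℂ) = a * b)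
    (htq : ∃ q : ℚ, t = q) : ∃ z : ℤ, t = z ∧ |z| ≤ 2 ∧ (d = 1 ∨ d = -1 ∧ z = 0) := by
  obtain ⟨q, rfl⟩ := htq
  obtain ⟨z, rfl⟩ : ∃ z : ℤ, q = z := Rat.exists_int_eq_of_isIntegral (A := ℂ) (by
    push_cast at ht ⊢
    rw [ht]
    exact (isIntegral_of_pow_eq_one hn ha).add (isIntegral_of_pow_eq_one hn hb))
  have ha1 := Complex.norm_eq_one_of_pow_eq_one ha hn
  have hb1 := Complex.norm_eq_one_of_pow_eq_one hb hn
  push_cast at ht ⊢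
  refine ⟨z, rfl, ?_, ?_⟩
  · have : ‖(z : ℂ)‖ ≤ 2 := by rw [ht]; linarith [norm_add_le a b]
    exact_mod_cast this
  · have hd1 : |d| = 1 := by
      rw [← Real.norm_eq_abs, ← Complex.norm_real, hd, norm_mul, ha1, hb1, one_mul]
    rcases (abs_eq zero_le_one).1 hd1 with h | h
    · exact .inl h
    · refine .inr ⟨h, ?_⟩
      have := Complex.re_add_eq_zero_of_mul_eq_neg_one ha1 (by rw [← hd, h]; simp)
      rw [← ht] at this
      exact_mod_cast this

namespace Matrix

theorem pow_eq_one_of_isRoot_charpoly {K ι : Type*} [Field K] [Fintype ι] [DecidableEq ι]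
    [Nonempty ι] {A : Matrix ι ι K} {n : ℕ} (hA : A ^ n = 1) {μ : K}
    (hμ : A.charpoly.IsRoot μ) : μ ^ n = 1 := by
  have := spectrum.pow_mem_pow A n (mem_spectrum_iff_isRoot_charpoly.2 hμ)
  rwa [hA, spectrum.one_eq, Set.mem_singleton_iff] at this

theorem exists_roots_charpoly_eq_pair {K : Type*} [Field K] [IsAlgClosed K]
    (A : Matrix (Fin 2) (Fin 2) K) : ∃ a b : K, A.charpoly.roots = {a, b} := by
  apply Multiset.card_eq_two.1
  rw [splits_iff_card_roots.1 (IsAlgClosed.splits _), charpoly_natDegree_eq_dim,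
    Fintype.card_fin]

theorem exists_trace_eq_add_det_eq_mul_of_pow_eq_one {M : Matrix (Fin 2) (Fin 2) ℝ} {n : ℕ}
    (hM : M ^ n = 1) :
    ∃ a b : ℂ, a ^ n = 1 ∧ b ^ n = 1 ∧ (M.trace : ℂ) = a + b ∧ (M.det : ℂ) = a * b := by
  set N := Complex.ofRealHom.mapMatrix M
  have hN : N ^ n = 1 := by rw [← map_pow, hM, map_one]
  obtain ⟨a, b, hab⟩ := N.exists_roots_charpoly_eq_pair
  have hroot {c : ℂ} (hc : c ∈ N.charpoly.roots) : c ^ n = 1 :=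
    pow_eq_one_of_isRoot_charpoly hN (isRoot_of_mem_roots hc)
  refine ⟨a, b, hroot (by simp [hab]), hroot (by simp [hab]), ?_, ?_⟩
  · rw [← Complex.ofRealHom_eq_coe, AddMonoidHom.map_trace]
    exact (trace_eq_sum_roots_charpoly_of_splits (IsAlgClosed.splits N.charpoly)).trans
      (by simp [hab])
  · rw [← Complex.ofRealHom_eq_coe, RingHom.map_det,
      det_eq_prod_roots_charpoly_of_splits (IsAlgClosed.splits _), hab]
    simp

theorem charpoly_mem_of_isOfFinOrder {M : Matrix (Fin 2) (Fin 2) ℝ} (hM : IsOfFinOrder M)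
    (htr : ∃ q : ℚ, M.trace = q) :
    M.charpoly ∈ ({(X - 1) ^ 2, (X + 1) ^ 2, X ^ 2 - 1, X ^ 2 + 1, X ^ 2 + X + 1,
      X ^ 2 - X + 1} : Set ℝ[X]) := by
  obtain ⟨n, hn, hMn⟩ := isOfFinOrder_iff_pow_eq_one.1 hM
  obtain ⟨a, b, ha, hb, htrace, hdet⟩ := M.exists_trace_eq_add_det_eq_mul_of_pow_eq_one hMn
  obtain ⟨t, ht, ht2, hd⟩ := exists_int_of_sum_prod_roots_of_unity hn.ne' ha hb htrace hdet htr
  rw [charpoly_fin_two, ht]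
  rcases hd with hd | ⟨hd, rfl⟩
  · obtain ⟨hl, hu⟩ := abs_le.1 ht2
    interval_cases t <;> simp [hd, map_ofNat C] <;> ring_nf <;> simp
  · simp [hd]; ring_nf; simp

theorem pow_eq_one_of_charpoly_dvd {R ι : Type*} [CommRing R] [Fintype ι] [DecidableEq ι]
    {A : Matrix ι ι R} {k : ℕ} (h : A.charpoly ∣ X ^ k - 1) : A ^ k = 1 := by
  obtain ⟨p, hp⟩ := h
  have := congrArg (aeval A) hp
  rwa [map_mul, aeval_self_charpoly, zero_mul, map_sub, map_pow, aeval_X, map_one,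
    sub_eq_zero] at this

theorem exists_pow_eq_one_of_charpoly_mem {M : Matrix (Fin 2) (Fin 2) ℝ} (hM : IsOfFinOrder M)
    (h : M.charpoly ∈ ({(X - 1) ^ 2, (X + 1) ^ 2, X ^ 2 - 1, X ^ 2 + 1, X ^ 2 + X + 1,
      X ^ 2 - X + 1} : Set ℝ[X])) : ∃ k ∈ ({1, 2, 3, 4, 6} : Finset ℕ), M ^ k = 1 := by
  obtain ⟨n, hn, hMn⟩ := isOfFinOrder_iff_pow_eq_one.1 hM
  have hCH := aeval_self_charpoly M
  rcases h with h | h | h | h | h | h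
  · refine ⟨1, by simp, ?_⟩
    rw [pow_one]
    exact eq_one_of_sq_sub_one_eq_zero_of_pow_eq_one (by simpa [h] using hCH) hn.ne' hMn
  · refine ⟨2, by simp, ?_⟩
    have hneg : -M = 1 := eq_one_of_sq_sub_one_eq_zero_of_pow_eq_one (n := 2 * n)
      (by rw [← neg_add', neg_sq]; simpa [h] using hCH) (by positivity)
      (by rw [(even_two_mul n).neg_pow, pow_mul', hMn, one_pow])
    rw [← neg_sq, hneg, one_pow]
  · exact ⟨2, by simp, pow_eq_one_of_charpoly_dvd (by rw [h])⟩
  · exact ⟨4, by simp, pow_eq_one_of_charpoly_dvd (h ▸ Dvd.intro (X ^ 2 - 1) (by ring))⟩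
  · exact ⟨3, by simp, pow_eq_one_of_charpoly_dvd (h ▸ Dvd.intro (X - 1) (by ring))⟩
  · exact ⟨6, by simp,
      pow_eq_one_of_charpoly_dvd (h ▸ Dvd.intro ((X + 1) * (X ^ 3 - 1)) (by ring))⟩

end Matrix

theorem mem_one_two_three_four_six_of_dvd {m k : ℕ} (hk : k ∈ ({1, 2, 3, 4, 6} : Finset ℕ))
    (hm : m ∣ k) : m ∈ ({1, 2, 3, 4, 6} : Set ℕ) := by
  have hsub : ∀ k ∈ ({1, 2, 3, 4, 6} : Finset ℕ), k.divisors ⊆ {1, 2, 3, 4, 6} := by decide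
  have hk0 : k ≠ 0 := by rintro rfl; simp at hk
  simpa using hsub k hk (Nat.mem_divisors.2 ⟨hm, hk0⟩)

theorem order_and_charpoly_of_finite_subgroup_GL2R_general
    (G : Subgroup (Matrix.GeneralLinearGroup (Fin 2) ℝ)) (hG : Finite G)
    (htr : ∀ x ∈ G, ∃ q : ℚ, Matrix.trace (x : Matrix (Fin 2) (Fin 2) ℝ) = (q : ℝ))
    (x : Matrix.GeneralLinearGroup (Fin 2) ℝ) (hx : x ∈ G) :
    orderOf x ∈ ({1, 2, 3, 4, 6} : Set ℕ) ∧
      (x : Matrix (Fin 2) (Fin 2) ℝ).charpoly ∈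
        ({(Polynomial.X - 1) ^ 2, (Polynomial.X + 1) ^ 2,
          Polynomial.X ^ 2 - 1, Polynomial.X ^ 2 + 1,
          Polynomial.X ^ 2 + Polynomial.X + 1,
          Polynomial.X ^ 2 - Polynomial.X + 1} : Set (Polynomial ℝ)) := by
  have hfin : IsOfFinOrder (x : Matrix (Fin 2) (Fin 2) ℝ) :=
    Units.isOfFinOrder_val.2 (G.subtype.isOfFinOrder (isOfFinOrder_of_finite (⟨x, hx⟩ : G)))
  have hcharpoly := Matrix.charpoly_mem_of_isOfFinOrder hfin (htr x hx)
  obtain ⟨k, hk, hxk⟩ := Matrix.exists_pow_eq_one_of_charpoly_mem hfin hcharpoly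
  refine ⟨?_, hcharpoly⟩
  rw [← orderOf_units]
  exact mem_one_two_three_four_six_of_dvd hk (orderOf_dvd_of_pow_eq_one hxk)

/-- Every element `x` of a finite subgroup `G` of `GL₂(ℝ)` with rational trace
and determinant has order `1, 2, 3, 4,` or `6`, and its characteristic polynomial is one of
`(T-1)², (T+1)², T²-1, T²+1, T²+T+1, T²-T+1`. -/
theorem order_and_charpoly_of_finite_subgroup_GL2R
    (G : Subgroup (Matrix.GeneralLinearGroup (Fin 2) ℝ)) (hG : Finite G)
    (htr : ∀ x ∈ G, ∃ q : ℚ, Matrix.trace (x : Matrix (Fin 2) (Fin 2) ℝ) = (q : ℝ))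
    (hdet : ∀ x ∈ G, ∃ q : ℚ, (x : Matrix (Fin 2) (Fin 2) ℝ).det = (q : ℝ))
    (x : Matrix.GeneralLinearGroup (Fin 2) ℝ) (hx : x ∈ G) :
    orderOf x ∈ ({1, 2, 3, 4, 6} : Set ℕ) ∧
      (x : Matrix (Fin 2) (Fin 2) ℝ).charpoly ∈
        ({(Polynomial.X - 1) ^ 2, (Polynomial.X + 1) ^ 2,
          Polynomial.X ^ 2 - 1, Polynomial.X ^ 2 + 1,
          Polynomial.X ^ 2 + Polynomial.X + 1,
          Polynomial.X ^ 2 - Polynomial.X + 1} : Set (Polynomial ℝ)) :=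
  order_and_charpoly_of_finite_subgroup_GL2R_general G hG htr x hx
end

section
/- Let ℓ be a prime, s a positive integer, and A ∈ Mat_2(ℤ/ℓ^s ℤ) a matrix that is not a scalar multiple of the identity. Let μ < s be the maximal non-negative integer such that A is congruent to a scalar matrix modulo ℓ^μ. Then there exists a matrix A' ∈ Mat_2(ℤ/ℓ^s ℤ) with ℓ^μ A' - A a scalar matrix, such that every matrix M commuting with A satisfies ℓ^μ M ∈ ℤ·A' + ℤ·I modulo the matrices in Mat_2(ℓ^{s-μ}ℤ/ℓ^s ℤ) that commute with A. -/
/-!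
Write `A = c + ℓ^μ B`. Maximality of `μ` says that `B` is not scalar modulo `ℓ`, and since
`ZMod (ℓ^s)` is local this yields a vector `v` such that `(v, B v)` is a basis. If `M` commutes
with `A`, then `ℓ^μ` kills `B M - M B`; writing `M v = α v + β B v`, the matrix
`ℓ^μ (M - α - β B)` kills both `v` and `B v`, hence vanishes. So `ℓ^μ M = ℓ^μ α + ℓ^μ β B` on the
nose: one can take `A' = B` and `N = 0`.
-/

open Matrix

namespace ZMod

variable {p s : ℕ}

theorem isUnit_iff_not_natCast_dvd_of_prime_pow (hp : p.Prime) (hs : s ≠ 0) (x : ZMod (p ^ s)) :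
    IsUnit x ↔ ¬ (p : ZMod (p ^ s)) ∣ x := by
  have : Fact (1 < p ^ s) := ⟨Nat.one_lt_pow hs hp.one_lt⟩
  constructor
  · rintro hx ⟨y, rfl⟩
    have hps : IsUnit ((p : ZMod (p ^ s)) ^ s) := (isUnit_of_mul_isUnit_left hx).pow s
    rw [← Nat.cast_pow, natCast_self] at hps
    exact not_isUnit_zero hps
  · intro hx
    rw [← natCast_zmod_val x, isUnit_iff_coprime]
    refine Nat.Coprime.pow_right s (Nat.coprime_comm.mp (hp.coprime_iff_not_dvd.mpr ?_))
    exact fun hdvd => hx ((Nat.cast_dvd_cast hdvd).trans (natCast_zmod_val x).dvd)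

theorem isLocalRing_prime_pow (hp : p.Prime) (hs : s ≠ 0) : IsLocalRing (ZMod (p ^ s)) :=
  haveI : Fact (1 < p ^ s) := ⟨Nat.one_lt_pow hs hp.one_lt⟩
  IsLocalRing.of_nonunits_add fun a b ha hb => by
    simp only [mem_nonunits_iff, isUnit_iff_not_natCast_dvd_of_prime_pow hp hs, not_not] at *
    exact dvd_add ha hb

end ZMod

namespace Matrix

variable {R : Type*} [CommRing R]

theorem exists_eq_smul_of_forall_dvd {m n : Type*} {X : Matrix m n R} {t : R}
    (h : ∀ i j, t ∣ X i j) : ∃ B : Matrix m n R, X = t • B := by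
  choose B hB using h
  exact ⟨of B, by ext i j; exact hB i j⟩

def IsScalarModulo {n : Type*} [Fintype n] [DecidableEq n] (t : R) (A : Matrix n n R) : Prop :=
  ∃ c : R, ∀ i j, t ∣ (A - c • 1) i j

theorem IsScalarModulo.smul_one_add_smul {n : Type*} [Fintype n] [DecidableEq n]
    {t : R} {B : Matrix n n R} (hB : IsScalarModulo t B) (c u : R) :
    IsScalarModulo (u * t) (c • 1 + u • B) := by
  obtain ⟨d, hd⟩ := hB
  refine ⟨c + u * d, fun i j => ?_⟩
  have hsub : c • 1 + u • B - (c + u * d) • (1 : Matrix n n R) = u • (B - d • 1) := by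
    rw [add_smul, mul_smul, smul_sub]; abel
  rw [hsub, smul_apply, smul_eq_mul]
  exact mul_dvd_mul_left u (hd i j)

theorem isScalarModulo_of_dvd {t : R} {B : Matrix (Fin 2) (Fin 2) R}
    (h10 : t ∣ B 1 0) (h01 : t ∣ B 0 1) (h11 : t ∣ B 1 1 - B 0 0) : IsScalarModulo t B :=
  ⟨B 0 0, fun i j => by fin_cases i <;> fin_cases j <;> simp [h10, h01, h11]⟩

theorem exists_smul_add_smul_eq_of_isUnit_det {v w : Fin 2 → R} (h : IsUnit (of ![v, w]).det)
    (u : Fin 2 → R) : ∃ α β : R, u = α • v + β • w := by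
  refine ⟨(u ᵥ* (of ![v, w])⁻¹) 0, (u ᵥ* (of ![v, w])⁻¹) 1, ?_⟩
  calc u = (u ᵥ* (of ![v, w])⁻¹) ᵥ* of ![v, w] := by
        rw [vecMul_vecMul, nonsing_inv_mul _ h, vecMul_one]
    _ = _ := by ext i; simp [vecMul, dotProduct, Fin.sum_univ_two]

theorem eq_zero_of_mulVec_eq_zero_of_isUnit_det {X : Matrix (Fin 2) (Fin 2) R} {v w : Fin 2 → R}
    (h : IsUnit (of ![v, w]).det) (hv : X *ᵥ v = 0) (hw : X *ᵥ w = 0) : X = 0 := by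
  refine ext_of_mulVec_single fun i => ?_
  obtain ⟨α, β, hu⟩ := exists_smul_add_smul_eq_of_isUnit_det h (Pi.single i 1)
  rw [hu, mulVec_add, mulVec_smul, mulVec_smul, hv, hw, zero_mulVec]
  simp

theorem exists_isUnit_det_of_isLocalRing [IsLocalRing R] {B : Matrix (Fin 2) (Fin 2) R}
    (hB : IsUnit (B 1 0) ∨ IsUnit (B 0 1) ∨ IsUnit (B 1 1 - B 0 0)) :
    ∃ v : Fin 2 → R, IsUnit (of ![v, B *ᵥ v]).det := by
  by_cases h10 : IsUnit (B 1 0)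
  · exact ⟨![1, 0], by simpa [det_fin_two, mulVec, dotProduct] using h10⟩
  by_cases h01 : IsUnit (B 0 1)
  · exact ⟨![0, 1], by simpa [det_fin_two, mulVec, dotProduct] using h01.neg⟩
  have h11 : IsUnit (B 1 1 - B 0 0) := by tauto
  refine ⟨![1, 1], ?_⟩
  have hdet : (of ![![1, 1], B *ᵥ ![1, 1]]).det = B 1 1 - B 0 0 + (B 1 0 - B 0 1) := by
    simp [det_fin_two]; ring
  rw [hdet]
  by_contra hu
  have hmax : ∀ x : R, ¬IsUnit x → x ∈ IsLocalRing.maximalIdeal R := fun x hx =>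
    (IsLocalRing.mem_maximalIdeal x).mpr hx
  refine hmax _ ?_ h11
  simpa using sub_mem (hmax _ hu) (sub_mem (hmax _ h10) (hmax _ h01))

theorem exists_smul_eq_of_smul_mul_comm {B M : Matrix (Fin 2) (Fin 2) R} {v : Fin 2 → R}
    (hv : IsUnit (of ![v, B *ᵥ v]).det) {t : R} (hBM : t • (B * M) = t • (M * B)) :
    ∃ α β : R, t • M = t • (α • 1 + β • B) := by
  obtain ⟨α, β, hMv⟩ := exists_smul_add_smul_eq_of_isUnit_det hv (M *ᵥ v)
  refine ⟨α, β, ?_⟩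
  set D := M - (α • 1 + β • B) with hD
  have hDv : D *ᵥ v = 0 := by
    rw [hD, sub_mulVec, add_mulVec, smul_mulVec, smul_mulVec, one_mulVec, hMv, sub_self]
  have hDB : t • (D * B) = t • (B * D) := by
    simp only [hD, sub_mul, mul_sub, add_mul, mul_add, smul_mul_assoc, mul_smul_comm, one_mul,
      mul_one, smul_sub, hBM]
  have htD : t • D = 0 := by
    refine eq_zero_of_mulVec_eq_zero_of_isUnit_det hv ?_ ?_
    · rw [smul_mulVec, hDv, smul_zero]
    · rw [mulVec_mulVec, smul_mul_assoc, hDB, ← smul_mul_assoc, ← mulVec_mulVec, hDv, mulVec_zero]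
  rwa [hD, smul_sub, sub_eq_zero] at htD

end Matrix

theorem commutant_of_nonscalar_matrix_general (ℓ : ℕ) (hℓ : ℓ.Prime) (s : ℕ) (hs : 0 < s)
    (A : Matrix (Fin 2) (Fin 2) (ZMod (ℓ ^ s)))
    (μ : ℕ)
    (hμ : ∃ c : ZMod (ℓ ^ s), ∀ i j, ∃ z : ZMod (ℓ ^ s),
      (A - c • 1) i j = (ℓ : ZMod (ℓ ^ s)) ^ μ * z)
    (hμmax : ¬ ∃ c : ZMod (ℓ ^ s), ∀ i j, ∃ z : ZMod (ℓ ^ s),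
      (A - c • 1) i j = (ℓ : ZMod (ℓ ^ s)) ^ (μ + 1) * z) :
    ∃ A' : Matrix (Fin 2) (Fin 2) (ZMod (ℓ ^ s)),
      (∃ c : ZMod (ℓ ^ s), ((ℓ : ZMod (ℓ ^ s)) ^ μ) • A' - A = c • 1) ∧
      ∀ M : Matrix (Fin 2) (Fin 2) (ZMod (ℓ ^ s)), A * M = M * A →
        ∃ (a b : ℤ) (N : Matrix (Fin 2) (Fin 2) (ZMod (ℓ ^ s))),
          (∀ i j, ∃ z : ZMod (ℓ ^ s), N i j = (ℓ : ZMod (ℓ ^ s)) ^ (s - μ) * z) ∧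
          A * N = N * A ∧
          ((ℓ : ZMod (ℓ ^ s)) ^ μ) • M = a • A' + b • (1 : Matrix (Fin 2) (Fin 2) (ZMod (ℓ ^ s))) + N := by
  have := ZMod.isLocalRing_prime_pow hℓ hs.ne'
  obtain ⟨c, hc⟩ := hμ
  obtain ⟨B, hAB⟩ := exists_eq_smul_of_forall_dvd hc
  rw [sub_eq_iff_eq_add'] at hAB
  have hB : IsUnit (B 1 0) ∨ IsUnit (B 0 1) ∨ IsUnit (B 1 1 - B 0 0) := by
    simp only [ZMod.isUnit_iff_not_natCast_dvd_of_prime_pow hℓ hs.ne', ← not_and_or]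
    rintro ⟨h10, h01, h11⟩
    have hA := (isScalarModulo_of_dvd h10 h01 h11).smul_one_add_smul c ((ℓ : ZMod (ℓ ^ s)) ^ μ)
    rw [← pow_succ, ← hAB] at hA
    exact hμmax hA
  obtain ⟨v, hv⟩ := exists_isUnit_det_of_isLocalRing hB
  refine ⟨B, ⟨-c, by rw [hAB, neg_smul]; abel⟩, fun M hM => ?_⟩
  have hBM : (ℓ : ZMod (ℓ ^ s)) ^ μ • (B * M) = (ℓ : ZMod (ℓ ^ s)) ^ μ • (M * B) := by
    rw [hAB] at hM
    simp only [add_mul, mul_add, smul_mul_assoc, mul_smul_comm, one_mul, mul_one] at hM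
    exact add_left_cancel hM
  obtain ⟨α, β, hMαβ⟩ := exists_smul_eq_of_smul_mul_comm hv hBM
  obtain ⟨a, ha⟩ := ZMod.intCast_surjective ((ℓ : ZMod (ℓ ^ s)) ^ μ * β)
  obtain ⟨b, hb⟩ := ZMod.intCast_surjective ((ℓ : ZMod (ℓ ^ s)) ^ μ * α)
  refine ⟨a, b, 0, fun i j => ⟨0, by simp⟩, by simp, ?_⟩
  rw [hMαβ, ← Int.cast_smul_eq_zsmul (ZMod (ℓ ^ s)), ← Int.cast_smul_eq_zsmul (ZMod (ℓ ^ s)), ha, hb]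
  module

/-- Let `ℓ` be a prime, `s` a positive integer, and `A ∈ Mat₂(ℤ/ℓ^s ℤ)` a
matrix that is not a scalar multiple of the identity.  Let `μ < s` be the maximal non-negative
integer such that `A` is congruent to a scalar matrix modulo `ℓ^μ`.  Then there exists
`A' ∈ Mat₂(ℤ/ℓ^s ℤ)` with `ℓ^μ A' - A` a scalar matrix, such that every matrix `M` commuting
with `A` satisfies `ℓ^μ M ∈ ℤ·A' + ℤ·I` modulo the matrices in `Mat₂(ℓ^{s-μ} ℤ/ℓ^s ℤ)` that
commute with `A`. -/
theorem commutant_of_nonscalar_matrix (ℓ : ℕ) (hℓ : ℓ.Prime) (s : ℕ) (hs : 0 < s)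
    (A : Matrix (Fin 2) (Fin 2) (ZMod (ℓ ^ s)))
    (hA : ∀ c : ZMod (ℓ ^ s), A ≠ c • (1 : Matrix (Fin 2) (Fin 2) (ZMod (ℓ ^ s))))
    (μ : ℕ) (hμs : μ < s)
    (hμ : ∃ c : ZMod (ℓ ^ s), ∀ i j, ∃ z : ZMod (ℓ ^ s),
      (A - c • 1) i j = (ℓ : ZMod (ℓ ^ s)) ^ μ * z)
    (hμmax : ¬ ∃ c : ZMod (ℓ ^ s), ∀ i j, ∃ z : ZMod (ℓ ^ s),
      (A - c • 1) i j = (ℓ : ZMod (ℓ ^ s)) ^ (μ + 1) * z) :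
    ∃ A' : Matrix (Fin 2) (Fin 2) (ZMod (ℓ ^ s)),
      (∃ c : ZMod (ℓ ^ s), ((ℓ : ZMod (ℓ ^ s)) ^ μ) • A' - A = c • 1) ∧
      ∀ M : Matrix (Fin 2) (Fin 2) (ZMod (ℓ ^ s)), A * M = M * A →
        ∃ (a b : ℤ) (N : Matrix (Fin 2) (Fin 2) (ZMod (ℓ ^ s))),
          (∀ i j, ∃ z : ZMod (ℓ ^ s), N i j = (ℓ : ZMod (ℓ ^ s)) ^ (s - μ) * z) ∧
          A * N = N * A ∧
          ((ℓ : ZMod (ℓ ^ s)) ^ μ) • M = a • A' + b • (1 : Matrix (Fin 2) (Fin 2) (ZMod (ℓ ^ s))) + N :=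
  commutant_of_nonscalar_matrix_general ℓ hℓ s hs A μ hμ hμmax
end

section
/- For any prime ℓ and positive integer s, every abelian subgroup H of GL_2(ℤ/ℓ^s ℤ) has order at most ℓ^{3s}. -/
/-!
A matrix `g ∈ GL₂(ℤ/ℓ^s)` is determined by `g₀₀` and the entries `(g₀₁, g₁₀, g₀₀ - g₁₁)` of
`g - g₁₁ • 1`, and two matrices commute iff these vectors are proportional. So it suffices that
pairwise proportional vectors in `(ℤ/ℓ^s)ⁿ` number at most `ℓ^((n-1)s)`. Let `ℓ^k` be the
largest power of `ℓ` dividing all their coordinates, and `w₀ = ℓ^k c` a vector with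
`c_{i₀} = u` a unit. Proportionality to `w₀` gives `ℓ^k (u w_j - c_j w_{i₀}) = 0`, so every `w`
is determined by `w_{i₀} ∈ ℓ^k ℤ/ℓ^s` (`ℓ^(s-k)` choices) and the `n - 1` residues
`u w_j - c_j w_{i₀}`, each killed by `ℓ^k` (`ℓ^k` choices).
-/

namespace ZMod

variable {p s k : ℕ}

theorem card_setOf_pow_dvd_le [NeZero p] (hk : k ≤ s) :
    Nat.card {x : ZMod (p ^ s) | (p : ZMod (p ^ s)) ^ k ∣ x} ≤ p ^ (s - k) := by
  obtain ⟨t, rfl⟩ := Nat.exists_eq_add_of_le hk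
  rw [Nat.add_sub_cancel_left]
  have hsub : {x : ZMod (p ^ (k + t)) | (p : ZMod (p ^ (k + t))) ^ k ∣ x} ⊆
      Set.range (fun m : Fin (p ^ t) => (p : ZMod (p ^ (k + t))) ^ k * ((m : ℕ) : ZMod _)) := by
    rintro _ ⟨c, rfl⟩
    refine ⟨⟨c.val % p ^ t, Nat.mod_lt _ (pow_pos (Nat.pos_of_neZero p) _)⟩, ?_⟩
    have hc : c = ((c.val / p ^ t * p ^ t + c.val % p ^ t : ℕ) : ZMod (p ^ (k + t))) := by
      rw [Nat.div_add_mod', natCast_zmod_val]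
    have hpow : (p : ZMod (p ^ (k + t))) ^ (k + t) = 0 := by rw [← Nat.cast_pow, natCast_self]
    conv_rhs => rw [hc]
    push_cast
    linear_combination (-(c.val / p ^ t : ℕ) : ZMod (p ^ (k + t))) * hpow
  calc Nat.card _ ≤ Nat.card (Set.range _) := Nat.card_mono (Set.toFinite _) hsub
    _ ≤ Nat.card (Fin (p ^ t)) := Finite.card_range_le _
    _ = p ^ t := Nat.card_fin _

theorem pow_dvd_of_pow_mul_eq_zero [NeZero p] (hk : k ≤ s) {x : ZMod (p ^ s)}
    (hx : (p : ZMod (p ^ s)) ^ k * x = 0) : (p : ZMod (p ^ s)) ^ (s - k) ∣ x := by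
  have hdvd : p ^ k * p ^ (s - k) ∣ p ^ k * x.val := by
    rw [← pow_add, Nat.add_sub_cancel' hk, ← natCast_eq_zero_iff]
    push_cast [natCast_zmod_val]
    exact hx
  obtain ⟨m, hm⟩ := Nat.dvd_of_mul_dvd_mul_left (pow_pos (Nat.pos_of_neZero p) k) hdvd
  exact ⟨m, by rw [← natCast_zmod_val x, hm]; push_cast; rfl⟩

theorem card_setOf_pow_mul_eq_zero_le [NeZero p] (hk : k ≤ s) :
    Nat.card {x : ZMod (p ^ s) | (p : ZMod (p ^ s)) ^ k * x = 0} ≤ p ^ k := by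
  calc Nat.card _ ≤ Nat.card {x : ZMod (p ^ s) | (p : ZMod (p ^ s)) ^ (s - k) ∣ x} :=
        Nat.card_mono (Set.toFinite _) fun _ => pow_dvd_of_pow_mul_eq_zero hk
    _ ≤ p ^ (s - (s - k)) := card_setOf_pow_dvd_le (Nat.sub_le s k)
    _ = p ^ k := by rw [Nat.sub_sub_self hk]

theorem isUnit_of_not_natCast_dvd [Fact p.Prime] {u : ZMod (p ^ s)}
    (hu : ¬ (p : ZMod (p ^ s)) ∣ u) : IsUnit u := by
  rw [← natCast_zmod_val u, isUnit_iff_coprime]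
  refine Nat.Coprime.pow_right _ (Nat.coprime_comm.mp ?_)
  refine (Nat.Prime.coprime_iff_not_dvd Fact.out).mpr fun ⟨m, hm⟩ => hu ⟨m, ?_⟩
  rw [← natCast_zmod_val u, hm, Nat.cast_mul]

theorem exists_pow_dvd_forall_and_eq_pow_mul_unit [Fact p.Prime] {α : Type*}
    (f : α → ZMod (p ^ s)) (hf : f ≠ 0) :
    ∃ k < s, (∀ a, (p : ZMod (p ^ s)) ^ k ∣ f a) ∧
      ∃ a u, IsUnit u ∧ f a = (p : ZMod (p ^ s)) ^ k * u := by
  classical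
  let P : ℕ → Prop := fun m => ∀ a, (p : ZMod (p ^ s)) ^ m ∣ f a
  have hPs : ¬ P s := fun h => hf <| funext fun a => by
    obtain ⟨c, hc⟩ := h a
    rw [hc, ← Nat.cast_pow, natCast_self, zero_mul, Pi.zero_apply]
  have hex : ∃ m, ¬ P m := ⟨s, hPs⟩
  obtain ⟨k, hk⟩ : ∃ k, Nat.find hex = k + 1 :=
    Nat.exists_eq_succ_of_ne_zero fun h0 => Nat.find_spec hex (h0 ▸ fun a => by simp)
  have hPk : P k := not_not.mp (Nat.find_min hex (by omega))
  obtain ⟨a, ha⟩ := not_forall.mp (hk ▸ Nat.find_spec hex)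
  obtain ⟨u, hu⟩ := hPk a
  refine ⟨k, by have := Nat.find_min' hex hPs; omega, hPk, a, u, ?_, hu⟩
  exact isUnit_of_not_natCast_dvd fun ⟨v, hv⟩ => ha ⟨v, by rw [hu, hv, pow_succ, mul_assoc]⟩

end ZMod

def IsProportional {ι R : Type*} [Mul R] (v w : ι → R) : Prop :=
  ∀ i j, v i * w j = v j * w i

theorem card_le_of_forall_isProportional {p s : ℕ} [Fact p.Prime] {ι : Type*} [Fintype ι]
    [Nontrivial ι] (S : Set (ι → ZMod (p ^ s))) (hS : ∀ v ∈ S, ∀ w ∈ S, IsProportional v w) :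
    Nat.card S ≤ p ^ ((Fintype.card ι - 1) * s) := by
  classical
  by_cases hzero : S ⊆ {0}
  · calc Nat.card S ≤ Nat.card ({0} : Set (ι → ZMod (p ^ s))) :=
          Nat.card_mono (Set.finite_singleton _) hzero
      _ = 1 := Nat.card_unique
      _ ≤ _ := Nat.one_le_pow _ _ (Nat.pos_of_neZero p)
  obtain ⟨k, hks, hdvd, ⟨⟨w₀, hw₀⟩, i₀⟩, u, hu, hw₀i₀⟩ :=
    ZMod.exists_pow_dvd_forall_and_eq_pow_mul_unit (fun x : S × ι => x.1.1 x.2) fun h => by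
      obtain ⟨w, hw, hw0⟩ := Set.not_subset.mp hzero
      exact hw0 (funext fun i => congrFun h (⟨w, hw⟩, i))
  choose c hc using fun j => hdvd (⟨w₀, hw₀⟩, j)
  set q := (p : ZMod (p ^ s)) ^ k
  have hresidue : ∀ w ∈ S, ∀ j, q * (u * w j - c j * w i₀) = 0 := fun w hw j => by
    linear_combination hS w₀ hw₀ w hw i₀ j - w j * hw₀i₀ + w i₀ * hc j
  let Φ : S → {x | q ∣ x} × ({j // j ≠ i₀} → {x | q * x = 0}) := fun w =>
    (⟨w.1 i₀, hdvd (w, i₀)⟩, fun j => ⟨u * w.1 j - c j * w.1 i₀, hresidue w.1 w.2 j⟩)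
  have hΦ : Function.Injective Φ := by
    intro w w' h
    simp only [Φ, Prod.mk.injEq, Subtype.mk.injEq, funext_iff, Subtype.forall] at h
    obtain ⟨h₀, hres⟩ := h
    ext j
    by_cases hj : j = i₀
    · exact hj ▸ h₀
    · rw [h₀] at hres
      exact hu.mul_left_cancel (sub_left_injective (hres j hj))
  calc Nat.card S ≤ Nat.card ({x | q ∣ x} × ({j // j ≠ i₀} → {x | q * x = 0})) :=
        Nat.card_le_card_of_injective Φ hΦ
    _ = Nat.card {x | q ∣ x} * Nat.card {x | q * x = 0} ^ (Fintype.card ι - 1) := by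
        simp [Fintype.card_subtype_compl]
    _ ≤ p ^ (s - k) * (p ^ k) ^ (Fintype.card ι - 1) := by
        gcongr
        · exact ZMod.card_setOf_pow_dvd_le hks.le
        · exact ZMod.card_setOf_pow_mul_eq_zero_le hks.le
    _ ≤ p ^ ((Fintype.card ι - 1) * s) := by
        rw [← pow_mul, ← pow_add]
        refine Nat.pow_le_pow_right (Nat.pos_of_neZero p) ?_
        obtain ⟨m, hm⟩ : ∃ m, Fintype.card ι - 1 = m + 1 :=
          ⟨Fintype.card ι - 2, by have := Fintype.one_lt_card (α := ι); omega⟩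
        obtain ⟨t, rfl⟩ := Nat.exists_eq_add_of_le hks.le
        rw [hm, Nat.add_sub_cancel_left]
        nlinarith

def nonscalarCoords {R : Type*} [Sub R] (A : Matrix (Fin 2) (Fin 2) R) : Fin 3 → R :=
  ![A 0 1, A 1 0, A 0 0 - A 1 1]

theorem Commute.isProportional_nonscalarCoords {R : Type*} [CommRing R]
    {A B : Matrix (Fin 2) (Fin 2) R} (h : Commute A B) :
    IsProportional (nonscalarCoords A) (nonscalarCoords B) := by
  have e00 := congrFun (congrFun h.eq 0) 0
  have e01 := congrFun (congrFun h.eq 0) 1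
  have e10 := congrFun (congrFun h.eq 1) 0
  simp only [Matrix.mul_apply, Fin.sum_univ_two] at e00 e01 e10
  intro i j
  fin_cases i <;> fin_cases j <;>
    simp only [nonscalarCoords, Fin.isValue, Fin.zero_eta, Fin.mk_one, Fin.reduceFinMk,
      Matrix.cons_val, Matrix.cons_val_zero, Matrix.cons_val_one]
  · linear_combination e00
  · linear_combination -e01
  · linear_combination -e00
  · linear_combination e10
  · linear_combination e01
  · linear_combination -e10

theorem Matrix.eq_of_apply_zero_zero_eq_of_nonscalarCoords_eq {R : Type*} [AddGroup R]
    {A B : Matrix (Fin 2) (Fin 2) R} (h₀₀ : A 0 0 = B 0 0)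
    (h : nonscalarCoords A = nonscalarCoords B) : A = B := by
  have h₀₁ := congrFun h 0
  have h₁₀ := congrFun h 1
  have h₂ := congrFun h 2
  simp only [nonscalarCoords, Matrix.cons_val_zero, Matrix.cons_val_one,
    Matrix.cons_val_two, Matrix.head_cons, Matrix.tail_cons] at h₀₁ h₁₀ h₂
  ext i j
  fin_cases i <;> fin_cases j
  · exact h₀₀
  · exact h₀₁
  · exact h₁₀
  · simpa [h₀₀] using h₂

theorem abelian_subgroup_GL2_card_le_general (ℓ : ℕ) (hℓ : ℓ.Prime) (s : ℕ)
    (H : Subgroup (Matrix.GeneralLinearGroup (Fin 2) (ZMod (ℓ ^ s))))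
    (hH : ∀ a ∈ H, ∀ b ∈ H, a * b = b * a) :
    Nat.card H ≤ ℓ ^ (3 * s) := by
  have := Fact.mk hℓ
  set S := (fun g : Matrix.GeneralLinearGroup (Fin 2) (ZMod (ℓ ^ s)) => nonscalarCoords g.1) '' H
  have hS : ∀ v ∈ S, ∀ w ∈ S, IsProportional v w := by
    rintro _ ⟨a, ha, rfl⟩ _ ⟨b, hb, rfl⟩
    exact (Commute.units_val (hH a ha b hb)).isProportional_nonscalarCoords
  let Ψ : H → ZMod (ℓ ^ s) × S := fun g => (g.1.1 0 0, ⟨_, g, g.2, rfl⟩)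
  have hΨ : Function.Injective Ψ := fun g g' h => Subtype.ext <| Units.ext <|
    Matrix.eq_of_apply_zero_zero_eq_of_nonscalarCoords_eq (congrArg Prod.fst h)
      (congrArg (fun x => x.2.1) h)
  calc Nat.card H ≤ Nat.card (ZMod (ℓ ^ s) × S) := Nat.card_le_card_of_injective Ψ hΨ
    _ ≤ ℓ ^ s * ℓ ^ ((Fintype.card (Fin 3) - 1) * s) := by
        rw [Nat.card_prod, Nat.card_zmod]
        exact Nat.mul_le_mul_left _ (card_le_of_forall_isProportional S hS)
    _ = ℓ ^ (3 * s) := by rw [Fintype.card_fin, ← pow_add]; ring_nf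

/-- For any prime `ℓ` and positive integer `s`, every abelian subgroup `H` of
`GL₂(ℤ/ℓ^s ℤ)` has order at most `ℓ^(3s)`. -/
theorem abelian_subgroup_GL2_card_le (ℓ : ℕ) (hℓ : ℓ.Prime) (s : ℕ) (hs : 0 < s)
    (H : Subgroup (Matrix.GeneralLinearGroup (Fin 2) (ZMod (ℓ ^ s))))
    (hH : ∀ a ∈ H, ∀ b ∈ H, a * b = b * a) :
    Nat.card H ≤ ℓ ^ (3 * s) :=
  abelian_subgroup_GL2_card_le_general ℓ hℓ s H hH
end

section
/- Let E, E', E'' be elliptic curves over an algebraically closed field of characteristic 0, g: E → E' a cyclic isogeny of degree d, and n, n' positive integers with n'·gcd(d,n) = gcd(d·n', n). Then a homomorphism f: E_n → E''_n of n-torsion subgroups factors through the restriction of [n']∘g to E_n if and only if f ∘ g^∨ ∘ [n/gcd(dn',n)] = 0 as a homomorphism E'_n → E''_n. -/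
/-- The restriction of a group homomorphism to `n`-torsion subgroups. -/
def torsMap {A B : Type} [AddCommGroup A] [AddCommGroup B] (n : ℕ) (g : A →+ B) :
    nTorsion n A →+ nTorsion n B where
  toFun x := ⟨g x, by
    show n • g (x : A) = 0
    rw [← map_nsmul, show n • (x : A) = 0 from x.2, map_zero]⟩
  map_zero' := Subtype.ext (by simp)
  map_add' a b := Subtype.ext (by simp)

lemma mem_nTorsion_iff {A : Type} [AddCommGroup A] (n : ℕ) (x : A) :
    x ∈ nTorsion n A ↔ n • x = 0 := Iff.rfl

lemma card_eq_range_mul_ker {A B : Type} [AddCommGroup A] [AddCommGroup B] [Finite A]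
    (ψ : A →+ B) : Nat.card A = Nat.card ψ.range * Nat.card ψ.ker := by
  rw [AddSubgroup.card_eq_card_quotient_mul_card_addSubgroup ψ.ker]
  congr 1
  exact Nat.card_congr (QuotientAddGroup.quotientKerEquivRange ψ).toEquiv

lemma tors_lift {A : Type} [AddCommGroup A]
    (htors : ∀ m : ℕ, 0 < m → Nat.card (nTorsion m A) = m ^ 2)
    (a b : ℕ) (ha : 0 < a) (hb : 0 < b) (z : A) (hz : a • z = 0) :
    ∃ y : A, (a * b) • y = 0 ∧ b • y = z := by
  have hab : 0 < a * b := Nat.mul_pos ha hb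
  have hfin_ab : Finite (nTorsion (a * b) A) := by
    refine Nat.finite_of_card_ne_zero ?_
    rw [htors _ hab]; positivity
  have hfin_a : Finite (nTorsion a A) := by
    refine Nat.finite_of_card_ne_zero ?_
    rw [htors _ ha]; positivity
  set ψ : nTorsion (a * b) A →+ A := b • (nTorsion (a * b) A).subtype with hψ
  have hψ_apply : ∀ x : nTorsion (a * b) A, ψ x = b • (x : A) := fun x => rfl
  have hrange_le : ψ.range ≤ nTorsion a A := by
    rintro y ⟨x, rfl⟩
    show a • (ψ x) = 0
    rw [hψ_apply, smul_smul]
    exact x.2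
  have hker : Nat.card ψ.ker = b ^ 2 := by
    rw [← htors b hb]
    refine Nat.card_congr (Equiv.mk (fun x => ⟨((x : nTorsion (a*b) A) : A), x.2⟩)
      (fun u => ⟨⟨(u : A), ?_⟩, ?_⟩) (fun x => rfl) (fun u => rfl))
    · show (a * b) • (u : A) = 0
      rw [mul_smul, show b • (u : A) = 0 from u.2, smul_zero]
    · show b • (u : A) = 0
      exact u.2
  have hcard : Nat.card ψ.range = a ^ 2 := by
    have h1 := card_eq_range_mul_ker ψ
    rw [htors _ hab, hker, mul_pow] at h1
    exact Nat.eq_of_mul_eq_mul_right (by positivity) h1.symm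
  have hrange_eq : ψ.range = nTorsion a A := by
    refine AddSubgroup.eq_of_le_of_card_ge hrange_le ?_
    rw [hcard, htors a ha]
  have hzmem : z ∈ ψ.range := hrange_eq ▸ (by exact hz)
  obtain ⟨x, hx⟩ := hzmem
  exact ⟨(x : A), x.2, hx⟩

lemma coprime_smul_tors {A : Type} [AddCommGroup A] (k r : ℕ) (hco : Nat.Coprime k r)
    (u : A) (hu : r • u = 0) : ∃ v : A, r • v = 0 ∧ k • v = u := by
  obtain ⟨p, q, hpq⟩ : ∃ p q : ℤ, (k : ℤ) * p + (r : ℤ) * q = 1 := by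
    have := Nat.gcd_eq_gcd_ab k r
    exact ⟨Nat.gcdA k r, Nat.gcdB k r, by rw [← this, hco]; norm_num⟩
  have hu' : (r : ℤ) • u = 0 := by rw [natCast_zsmul, hu]
  refine ⟨p • u, ?_, ?_⟩
  · rw [smul_comm, hu, smul_zero]
  · calc k • p • u = (k : ℤ) • p • u := (natCast_zsmul (p • u) k).symm
      _ = ((k : ℤ) * p) • u := by rw [smul_smul]
      _ = ((k : ℤ) * p) • u + ((r : ℤ) * q) • u := by
          rw [mul_comm (r:ℤ) q, ← smul_smul q (r:ℤ) u, hu', smul_zero, add_zero]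
      _ = ((k : ℤ) * p + (r : ℤ) * q) • u := by rw [add_zsmul]
      _ = u := by rw [hpq, one_zsmul]

/-- Let `E, E', E''` be elliptic curves over an algebraically closed field of
characteristic `0` — abstractly, their groups of points: divisible abelian groups whose
`m`-torsion has order `m²` for every `m ≥ 1` — let `g : E → E'` be a cyclic isogeny of degree
`d` (a surjective homomorphism with cyclic kernel of order `d`, admitting a dual isogeny `g^∨`
with `g^∨ ∘ g = [d]` and `g ∘ g^∨ = [d]`), and let `n, n'` be positive integers with
`n'·gcd(d,n) = gcd(d·n', n)`.  Then a homomorphism `f : E_n → E''_n` of `n`-torsion subgroups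
factors through the restriction of `[n'] ∘ g` to `E_n` if and only if
`f ∘ g^∨ ∘ [n / gcd(d·n', n)] = 0` as a homomorphism `E'_n → E''_n`. -/
theorem factors_through_iff_kills
    (E E' E'' : Type) [AddCommGroup E] [AddCommGroup E'] [AddCommGroup E'']
    (hdivE : ∀ m : ℕ, 0 < m → Function.Surjective fun x : E => m • x)
    (hdivE' : ∀ m : ℕ, 0 < m → Function.Surjective fun x : E' => m • x)
    (hdivE'' : ∀ m : ℕ, 0 < m → Function.Surjective fun x : E'' => m • x)
    (htorsE : ∀ m : ℕ, 0 < m → Nat.card (nTorsion m E) = m ^ 2)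
    (htorsE' : ∀ m : ℕ, 0 < m → Nat.card (nTorsion m E') = m ^ 2)
    (htorsE'' : ∀ m : ℕ, 0 < m → Nat.card (nTorsion m E'') = m ^ 2)
    (d : ℕ) (hd : 0 < d)
    (g : E →+ E') (hgsurj : Function.Surjective g)
    (hgker : Nat.card g.ker = d) (hgcyc : IsAddCyclic g.ker)
    (gdual : E' →+ E)
    (hdual₁ : gdual.comp g = d • AddMonoidHom.id E)
    (hdual₂ : g.comp gdual = d • AddMonoidHom.id E')
    (n n' : ℕ) (hn : 0 < n) (hn' : 0 < n')
    (hgcd : n' * Nat.gcd d n = Nat.gcd (d * n') n)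
    (f : nTorsion n E →+ nTorsion n E'') :
    (∃ h : nTorsion n E' →+ nTorsion n E'', f = h.comp (n' • torsMap n g)) ↔
      (n / Nat.gcd (d * n') n) • f.comp (torsMap n gdual) = 0 := by
  have hdual₁' : ∀ x : E, gdual (g x) = d • x := fun x => by
    have := DFunLike.congr_fun hdual₁ x
    simpa using this
  have hdual₂' : ∀ y : E', g (gdual y) = d • y := fun y => by
    have := DFunLike.congr_fun hdual₂ y
    simpa using this
  set e := Nat.gcd d n with he_def
  set G := Nat.gcd (d * n') n with hG_def
  set m := n / G with hm_def
  have he_pos : 0 < e := Nat.gcd_pos_of_pos_right d hn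
  have hG_pos : 0 < G := Nat.gcd_pos_of_pos_right _ hn
  have hGe : G = n' * e := hgcd.symm
  have hGn : G ∣ n := Nat.gcd_dvd_right _ n
  have hm_pos : 0 < m := Nat.div_pos (Nat.le_of_dvd hn hGn) hG_pos
  have hmG : m * G = n := Nat.div_mul_cancel hGn
  have hmn'e : m * (n' * e) = n := by rw [← hGe]; exact hmG
  have he_d : e ∣ d := Nat.gcd_dvd_left d n
  have he_n : e ∣ n := Nat.gcd_dvd_right d n
  have hn'n : n' ∣ n := dvd_trans (Dvd.intro e rfl) (hGe ▸ hGn)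
  have hdee : d / e * e = d := Nat.div_mul_cancel he_d
  have hnee : e * (n / e) = n := Nat.mul_div_cancel' he_n
  have hnn' : n' * (n / n') = n := Nat.mul_div_cancel' hn'n
  have hne_pos : 0 < n / e := Nat.div_pos (Nat.le_of_dvd hn he_n) he_pos
  have hnn'_pos : 0 < n / n' := Nat.div_pos (Nat.le_of_dvd hn hn'n) hn'
  have key1 : m * n' * d = d / e * n := by
    calc m * n' * d = m * n' * (d / e * e) := by rw [hdee]
      _ = d / e * (m * (n' * e)) := by ring
      _ = d / e * n := by rw [hmn'e]
  have hn'm : n' * m = n / e := by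
    refine (Nat.div_eq_of_eq_mul_left he_pos ?_).symm
    calc n = m * (n' * e) := hmn'e.symm
      _ = n' * m * e := by ring
  have hgcd2 : Nat.gcd d (n / n') = e := by
    refine Nat.dvd_antisymm ?_ ?_
    · exact Nat.dvd_gcd (Nat.gcd_dvd_left _ _)
        ((Nat.gcd_dvd_right d (n / n')).trans (Nat.div_dvd_of_dvd hn'n))
    · refine Nat.dvd_gcd he_d ?_
      rw [Nat.dvd_div_iff_mul_dvd hn'n]
      exact hGe ▸ hGn
  have hco : Nat.Coprime (d / e) (n / n' / e) := by
    have h := Nat.coprime_div_gcd_div_gcd (m := d) (n := n / n') (by rw [hgcd2]; exact he_pos)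
    rwa [hgcd2] at h
  have hco2 : Nat.Coprime (d / e) n' := by
    have h1 : e * Nat.gcd (d / e) n' ∣ d := by
      rw [← Nat.dvd_div_iff_mul_dvd he_d]
      exact Nat.gcd_dvd_left _ _
    have h2 : e * Nat.gcd (d / e) n' ∣ n := by
      refine dvd_trans ?_ (hGe ▸ hGn)
      rw [mul_comm e _]
      exact Nat.mul_dvd_mul_right (Nat.gcd_dvd_right _ _) e
    have h3 : e * Nat.gcd (d / e) n' ∣ e := Nat.dvd_gcd h1 h2
    have h4 : e * Nat.gcd (d / e) n' ∣ e * 1 := by rwa [mul_one]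
    exact Nat.dvd_one.mp ((Nat.mul_dvd_mul_iff_left he_pos).mp h4)
  have key2 : m * d = d / e * (n / n') := by
    refine Nat.eq_of_mul_eq_mul_right (Nat.mul_pos hn' he_pos) ?_
    calc m * d * (n' * e) = m * (n' * e) * d := by ring
      _ = n * d := by rw [hmn'e]
      _ = (d / e * e) * (n / n' * n') := by rw [hdee, mul_comm (n/n') n', hnn']; ring
      _ = d / e * (n / n') * (n' * e) := by ring
  -- the generator of the kernel of g
  have hkerfin : Finite g.ker := Nat.finite_of_card_ne_zero (by rw [hgker]; exact hd.ne')
  obtain ⟨t₀, ht₀⟩ := hgcyc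
  have htop : AddSubgroup.zmultiples t₀ = ⊤ := (AddSubgroup.eq_top_iff' _).mpr ht₀
  have hord : addOrderOf t₀ = d := by
    rw [← Nat.card_zmultiples t₀, htop, AddSubgroup.card_top, hgker]
  set t : E := (t₀ : E) with ht_def
  have hgt : g t = 0 := t₀.2
  have hzsmul : ∀ k : ℤ, k • t₀ = 0 ↔ (d : ℤ) ∣ k := by
    intro k
    constructor
    · intro hk
      have := addOrderOf_dvd_iff_zsmul_eq_zero.mpr hk
      rwa [hord] at this
    · intro hk
      exact addOrderOf_dvd_iff_zsmul_eq_zero.mp (by rwa [hord])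
  constructor
  · -- forward direction
    rintro ⟨h, rfl⟩
    refine AddMonoidHom.ext fun y => ?_
    rw [AddMonoidHom.zero_apply]
    show m • (h ((n' • torsMap n g) ((torsMap n gdual) y))) = 0
    rw [← map_nsmul]
    have harg : m • ((n' • torsMap n g) ((torsMap n gdual) y)) = 0 := by
      refine Subtype.ext ?_
      show m • (n' • g (gdual (y : E'))) = 0
      rw [hdual₂' (y : E'), smul_smul, smul_smul, key1, mul_smul,
        show n • (y : E') = 0 from y.2, smul_zero]
    rw [harg, map_zero]
  · -- reverse direction
    intro H
    -- Step 1: f kills m • gdual(E'_n)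
    have hS : ∀ (y : E') (hy : n • y = 0) (hmem : m • gdual y ∈ nTorsion n E),
        f ⟨m • gdual y, hmem⟩ = 0 := by
      intro y hy hmem
      have h0 := DFunLike.congr_fun H ⟨y, hy⟩
      show f ⟨m • gdual y, hmem⟩ = 0
      have harg : (⟨m • gdual y, hmem⟩ : nTorsion n E) = m • (torsMap n gdual ⟨y, hy⟩) :=
        Subtype.ext rfl
      rw [harg, map_nsmul]
      exact h0
    -- Step 2: kernel of n' • (g restricted) is killed by f
    have hker_f : ∀ x : nTorsion n E, n' • g (x : E) = 0 → f x = 0 := by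
      intro x hx2
      have hx1 : n • (x : E) = 0 := x.2
      have hmemk : n' • (x : E) ∈ g.ker := AddMonoidHom.mem_ker.mpr (by rw [map_nsmul, hx2])
      obtain ⟨k, hk⟩ := AddSubgroup.mem_zmultiples_iff.mp (ht₀ ⟨n' • (x : E), hmemk⟩)
      have hkt : k • t = n' • (x : E) := by
        have := congrArg Subtype.val hk
        simpa using this
      have hdvd : (d : ℤ) ∣ ((n / n' : ℕ) : ℤ) * k := by
        rw [← hzsmul]
        refine Subtype.ext ?_
        show (((n / n' : ℕ) : ℤ) * k) • t = 0
        rw [mul_smul, natCast_zsmul, hkt, smul_smul, mul_comm (n/n') n', hnn', hx1]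
      have hdvd2 : ((d / e : ℕ) : ℤ) ∣ k := by
        have hde : (d : ℤ) = (e : ℤ) * ((d / e : ℕ) : ℤ) := by
          exact_mod_cast (by rw [mul_comm]; exact hdee.symm : d = e * (d/e))
        have hene : e ∣ n / n' := by rw [← hgcd2]; exact Nat.gcd_dvd_right d (n / n')
        have hse : ((n / n' : ℕ) : ℤ) = (e : ℤ) * ((n / n' / e : ℕ) : ℤ) := by
          exact_mod_cast (Nat.mul_div_cancel' hene).symm
        refine IsCoprime.dvd_of_dvd_mul_left
          (show IsCoprime ((d/e : ℕ) : ℤ) ((n/n'/e : ℕ) : ℤ) from Nat.isCoprime_iff_coprime.mpr hco) ?_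
        have h5 : (e : ℤ) * ((d/e : ℕ) : ℤ) ∣ (e : ℤ) * (((n/n'/e : ℕ) : ℤ) * k) := by
          rw [← hde, ← mul_assoc, ← hse]; exact hdvd
        exact (mul_dvd_mul_iff_left (show (e:ℤ) ≠ 0 by exact_mod_cast he_pos.ne')).mp h5
      obtain ⟨j, hj⟩ := hdvd2
      have hxj : n' • (x : E) = j • ((d / e) • t) := by
        rw [← hkt, hj, mul_comm, mul_smul, natCast_zsmul]
      -- construct the special element x₁ = m • gdual y₁
      obtain ⟨w, hw0⟩ := hdivE e he_pos t
      have hw : e • w = t := hw0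
      have hy₂ : e • (g w) = 0 := by rw [← map_nsmul, hw, hgt]
      obtain ⟨y₁, hy₁n, hy₁⟩ := tors_lift htorsE' e (n / e) he_pos hne_pos (g w) hy₂
      rw [hnee] at hy₁n
      have hx₁mem : m • gdual y₁ ∈ nTorsion n E := by
        rw [mem_nTorsion_iff, smul_comm, ← map_nsmul, hy₁n, map_zero, smul_zero]
      have hx₁ : n' • (m • gdual y₁) = (d / e) • t := by
        rw [smul_smul, hn'm, ← map_nsmul, hy₁, hdual₁' w, ← hw, smul_smul, hdee]
      have hfx₁ : f ⟨m • gdual y₁, hx₁mem⟩ = 0 := hS y₁ hy₁n hx₁mem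
      -- the residual element u
      set u : E := (x : E) - j • (m • gdual y₁) with hu_def
      have hun' : n' • u = 0 := by
        rw [hu_def, smul_sub, hxj, smul_comm n' j, hx₁, sub_self]
      have humem : u ∈ nTorsion n E := by
        rw [mem_nTorsion_iff, hu_def, smul_sub, hx1, smul_comm n j,
          show n • (m • gdual y₁) = 0 from hx₁mem, smul_zero, zero_sub, neg_zero]
      obtain ⟨u', hu'₁, hu'₂⟩ := coprime_smul_tors (d / e) n' hco2 u hun'
      obtain ⟨v, hv₁, hv₂⟩ := tors_lift htorsE n' (n / n') hn' hnn'_pos u' hu'₁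
      rw [hnn'] at hv₁
      have hgv : n • (g v) = 0 := by rw [← map_nsmul, hv₁, map_zero]
      have huv : u = m • gdual (g v) := by
        rw [hdual₁' v, smul_smul, key2, mul_smul, hv₂, hu'₂]
      have hfu : f ⟨u, humem⟩ = 0 := by
        have hmem2 : m • gdual (g v) ∈ nTorsion n E := by rw [← huv]; exact humem
        have h := hS (g v) hgv hmem2
        have heq : (⟨u, humem⟩ : nTorsion n E) = ⟨m • gdual (g v), hmem2⟩ := Subtype.ext huv
        rw [heq]; exact h
      have hxdecomp : x = ⟨u, humem⟩ + j • (⟨m • gdual y₁, hx₁mem⟩ : nTorsion n E) := by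
        refine Subtype.ext ?_
        show (x : E) = u + j • (m • gdual y₁)
        rw [hu_def]
        abel
      rw [hxdecomp, map_add, map_zsmul, hfu, hfx₁, smul_zero, add_zero]
    -- Step 3: build the factorization using injectivity of divisible groups
    letI : DivisibleBy E'' ℕ :=
      { div := fun a k => if h : 0 < k then Classical.choose (hdivE'' k h a) else 0
        div_zero := fun a => by simp
        div_cancel := fun {k} a hk => by
          have hkpos : 0 < k := Nat.pos_of_ne_zero hk
          simp only [dif_pos hkpos]
          exact Classical.choose_spec (hdivE'' k hkpos a) }
    letI : DivisibleBy E'' ℤ := AddGroup.divisibleByIntOfDivisibleByNat E''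
    set φ : nTorsion n E →+ nTorsion n E' := n' • torsMap n g with hφ_def
    have hkerφ : ∀ x ∈ φ.ker, f x = 0 := by
      intro x hx
      refine hker_f x ?_
      have h0 : φ x = 0 := hx
      exact congrArg Subtype.val h0
    let q : (nTorsion n E) ⧸ φ.ker →+ nTorsion n E'' := QuotientAddGroup.lift φ.ker f hkerφ
    let eqv : ((nTorsion n E) ⧸ φ.ker) ≃+ φ.range := QuotientAddGroup.quotientKerEquivRange φ
    let h₀ : φ.range →+ E'' := ((nTorsion n E'').subtype.comp q).comp eqv.symm.toAddMonoidHom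
    obtain ⟨h₁, hh₁⟩ := (Module.Baer.of_divisible E'').extension_property_addMonoidHom
      φ.range.subtype Subtype.val_injective h₀
    have hmemh : ∀ y : nTorsion n E', n • h₁ y = 0 := fun y => by
      rw [← map_nsmul, show (n • y : nTorsion n E') = 0 from Subtype.ext y.2, map_zero]
    refine ⟨{ toFun := fun y => ⟨h₁ y, hmemh y⟩
              map_zero' := Subtype.ext (map_zero h₁)
              map_add' := fun a b => Subtype.ext (map_add h₁ a b) }, ?_⟩
    refine AddMonoidHom.ext fun x => Subtype.ext ?_
    show (f x : E'') = h₁ (φ x)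
    have hmemr : φ x ∈ φ.range := ⟨x, rfl⟩
    have h1 : h₁ (φ x) = h₀ ⟨φ x, hmemr⟩ := DFunLike.congr_fun hh₁ ⟨φ x, hmemr⟩
    have h2 : eqv.symm ⟨φ x, hmemr⟩ = QuotientAddGroup.mk x := by
      rw [AddEquiv.symm_apply_eq]
      rfl
    rw [h1]
    show (f x : E'') = ((q (eqv.symm ⟨φ x, hmemr⟩)) : E'')
    rw [h2]
    rfl
end

section
/- Let Γ be a subgroup of GL_2(ℤ/nℤ) and let R be its centralizer in Mat_2(ℤ/nℤ). Then as an abelian group, R ≅ ℤ/nℤ × ℤ/n₁ℤ × (ℤ/n₂ℤ)², for positive integers n₂ ∣ n₁ ∣ n. -/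
/-!
The shape `ℤ/n × ℤ/n₁ × (ℤ/n₂)²` with `n₂ ∣ n₁ ∣ n` is multiplicative over coprime moduli, and by
the Chinese remainder theorem so is the centralizer, so it suffices to treat `n = p ^ k`.
Let `j ≤ k` be maximal with every element of `Γ` congruent to a scalar modulo `p ^ j`, and put
`q = p ^ (k - j)`. Then `q • Mat₂ ⊆ R`. If `j < k`, some `a + p ^ j • B ∈ Γ` has `B` not scalar
modulo `p`, and every `M ∈ R` satisfies `M * B ≡ B * M` modulo `q`. Because an off-diagonal entry
or the diagonal difference of `B` is a unit, `Mat₂` has linear coordinates in which the scalars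
form the first axis and the last two coordinates are entries of `M * B - B * M`. In them
`R = ℤ/p^k × K × (q) × (q)` with `(q) ≤ K = {β | β • B ∈ R}`, and subgroups of `ℤ/p^k` are cyclic.
-/

open Matrix

local notation "Mat₂ " R:max => Matrix (Fin 2) (Fin 2) R

def HasCentralizerShape (n : ℕ) (G : Type*) [AddGroup G] : Prop :=
  ∃ n₁ n₂ : ℕ, 0 < n₂ ∧ n₂ ∣ n₁ ∧ n₁ ∣ n ∧ Nonempty (G ≃+ ZMod n × ZMod n₁ × ZMod n₂ × ZMod n₂)

namespace HasCentralizerShape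

variable {n : ℕ} {G H : Type*} [AddGroup G] [AddGroup H]

theorem of_addEquiv (e : G ≃+ H) (h : HasCentralizerShape n H) : HasCentralizerShape n G := by
  obtain ⟨n₁, n₂, h₂, h₂₁, h₁, ⟨f⟩⟩ := h
  exact ⟨n₁, n₂, h₂, h₂₁, h₁, ⟨e.trans f⟩⟩

theorem prod {m : ℕ} (hnm : n.Coprime m) (hG : HasCentralizerShape n G)
    (hH : HasCentralizerShape m H) : HasCentralizerShape (n * m) (G × H) := by
  obtain ⟨n₁, n₂, hn₂, hn₂₁, hn₁, ⟨eG⟩⟩ := hG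
  obtain ⟨m₁, m₂, hm₂, hm₂₁, hm₁, ⟨eH⟩⟩ := hH
  have h₁ : n₁.Coprime m₁ := (hnm.coprime_dvd_left hn₁).coprime_dvd_right hm₁
  have h₂ : n₂.Coprime m₂ := (h₁.coprime_dvd_left hn₂₁).coprime_dvd_right hm₂₁
  let crt {a b : ℕ} (h : a.Coprime b) : ZMod a × ZMod b ≃+ ZMod (a * b) :=
    (ZMod.chineseRemainder h).symm.toAddEquiv
  refine ⟨n₁ * m₁, n₂ * m₂, Nat.mul_pos hn₂ hm₂, Nat.mul_dvd_mul hn₂₁ hm₂₁,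
    Nat.mul_dvd_mul hn₁ hm₁, ⟨(eG.prodCongr eH).trans ?_⟩⟩
  exact (AddEquiv.prodProdProdComm _ _ _ _).trans <| (crt hnm).prodCongr <|
    (AddEquiv.prodProdProdComm _ _ _ _).trans <| (crt h₁).prodCongr <|
    (AddEquiv.prodProdProdComm _ _ _ _).trans <| (crt h₂).prodCongr (crt h₂)

theorem of_le [NeZero n] {K Q : AddSubgroup (ZMod n)} (hQK : Q ≤ K) :
    HasCentralizerShape n (ZMod n × K × Q × Q) := by
  let e (H : AddSubgroup (ZMod n)) : H ≃+ ZMod (Nat.card H) :=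
    (zmodAddCyclicAddEquiv inferInstance).symm
  exact ⟨Nat.card K, Nat.card Q, Nat.card_pos, AddSubgroup.card_dvd_of_le hQK,
    (AddSubgroup.card_addSubgroup_dvd_card K).trans (Nat.card_zmod n).dvd,
    ⟨(AddEquiv.refl _).prodCongr ((e K).prodCongr ((e Q).prodCongr (e Q)))⟩⟩

end HasCentralizerShape

noncomputable def Matrix.prodRingEquiv (m α β : Type*) [Fintype m] [DecidableEq m] [Semiring α]
    [Semiring β] : Matrix m m (α × β) ≃+* Matrix m m α × Matrix m m β :=
  RingEquiv.ofBijective ((RingHom.fst α β).mapMatrix.prod (RingHom.snd α β).mapMatrix)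
    ⟨fun M N h => by
      ext i j
      · exact congrFun₂ (congrArg Prod.fst h) i j
      · exact congrFun₂ (congrArg Prod.snd h) i j,
     fun X => ⟨Matrix.of fun i j => (X.1 i j, X.2 i j), rfl⟩⟩

namespace Subring

variable {A B C : Type*} [Ring A] [Ring B] [Ring C]

theorem map_centralizer (e : A ≃+* B) (S : Set A) :
    (centralizer S).map (e : A →+* B) = centralizer (e '' S) := by
  ext x
  rw [mem_map_equiv, mem_centralizer_iff, mem_centralizer_iff, Set.forall_mem_image]
  refine forall₂_congr fun g _ => ?_
  rw [← e.injective.eq_iff, map_mul, map_mul, RingEquiv.apply_symm_apply]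

theorem centralizer_eq_prod (T : Set (A × B)) :
    centralizer T = (centralizer (Prod.fst '' T)).prod (centralizer (Prod.snd '' T)) := by
  ext ⟨x, y⟩
  simp only [mem_centralizer_iff, mem_prod, Set.forall_mem_image, Prod.forall, Prod.ext_iff,
    Prod.mk_mul_mk]
  grind

noncomputable def centralizerEquivProd (e : A ≃+* B × C) (S : Set A) :
    centralizer S ≃+* centralizer (Prod.fst ∘ e '' S) × centralizer (Prod.snd ∘ e '' S) :=
  (e.subringMap (s := centralizer S)).trans <|
    (RingEquiv.subringCongr <| by
      rw [Set.image_comp, Set.image_comp Prod.snd]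
      exact (map_centralizer e S).trans (centralizer_eq_prod _)).trans <|
    prodEquiv _ _

end Subring

theorem exists_addEquiv_prod_of_coordinates {R V : Type*} [CommRing R] [AddCommGroup V]
    [Module R V] (c : V ≃ₗ[R] R × R × R × R) (C : AddSubgroup V) (q : R)
    (hscal : ∀ α : R, c.symm (α, 0, 0, 0) ∈ C) (hq : ∀ v, q • v ∈ C)
    (hdvd : ∀ v ∈ C, q ∣ (c v).2.2.1 ∧ q ∣ (c v).2.2.2) :
    ∃ K : AddSubgroup R, (Ideal.span {q}).toAddSubgroup ≤ K ∧
      Nonempty (C ≃+ R × K × (Ideal.span {q}).toAddSubgroup × (Ideal.span {q}).toAddSubgroup) := by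
  set Q := (Ideal.span {q}).toAddSubgroup
  have mem_Q (x : R) : x ∈ Q ↔ q ∣ x := Ideal.mem_span_singleton
  let K : AddSubgroup R :=
    C.comap ((c.symm : R × R × R × R →+ V).comp
      ((AddMonoidHom.inr R _).comp (AddMonoidHom.inl R (R × R))))
  have mem_K (β : R) : β ∈ K ↔ c.symm (0, β, 0, 0) ∈ C := Iff.rfl
  have hCK : C.map c.toAddEquiv.toAddMonoidHom = (⊤ : AddSubgroup R).prod (K.prod (Q.prod Q)) := by
    ext ⟨α, β, γ, δ⟩
    rw [AddSubgroup.mem_map_equiv]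
    simp only [AddSubgroup.mem_prod, AddSubgroup.mem_top, true_and, mem_K, mem_Q]
    change c.symm _ ∈ C ↔ _
    have hsplit : c.symm (α, β, γ, δ) =
        c.symm (α, 0, 0, 0) + c.symm (0, β, 0, 0) + c.symm (0, 0, γ, δ) := by
      rw [← map_add, ← map_add]; simp
    have htail : q ∣ γ → q ∣ δ → c.symm (0, 0, γ, δ) ∈ C := by
      rintro ⟨γ, rfl⟩ ⟨δ, rfl⟩
      rw [show ((0 : R), (0 : R), q * γ, q * δ) = q • (0, 0, γ, δ) by simp, map_smul]
      exact hq _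
    constructor
    · intro h
      obtain ⟨hγ, hδ⟩ : q ∣ γ ∧ q ∣ δ := by simpa using hdvd _ h
      refine ⟨?_, hγ, hδ⟩
      convert C.sub_mem (C.sub_mem h (hscal α)) (htail hγ hδ) using 1
      rw [hsplit]; abel
    · rintro ⟨hβ, hγ, hδ⟩
      rw [hsplit]
      exact C.add_mem (C.add_mem (hscal α) hβ) (htail hγ hδ)
  refine ⟨K, fun x hx => ?_, ⟨(c.toAddEquiv.addSubgroupMap C).trans <|
    (AddEquiv.addSubgroupCongr hCK).trans <| (AddSubgroup.prodEquiv _ _).trans <|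
    AddEquiv.prodCongr AddSubgroup.topEquiv <| (AddSubgroup.prodEquiv _ _).trans <|
    AddEquiv.prodCongr (AddEquiv.refl _) (AddSubgroup.prodEquiv _ _)⟩⟩
  obtain ⟨y, rfl⟩ := (mem_Q x).mp hx
  rw [mem_K, show ((0 : R), q * y, (0 : R), (0 : R)) = q • (0, y, 0, 0) by simp, map_smul]
  exact hq _

section Commutator

variable {R : Type*} [CommRing R]

noncomputable def commutatorCoords₁₀ (B : Mat₂ R) (hB : IsUnit (B 1 0)) :
    Mat₂ R ≃ₗ[R] R × R × R × R where
  toFun M := (M 0 0, M 1 0, (M * B - B * M) 0 0, (M * B - B * M) 1 0)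
  invFun x := !![x.1, Ring.inverse (B 1 0) * (x.2.2.1 + B 0 1 * x.2.1);
    x.2.1, x.1 - Ring.inverse (B 1 0) * (x.2.1 * (B 0 0 - B 1 1) - x.2.2.2)]
  map_add' M N := by ext <;> simp [mul_apply] <;> ring
  map_smul' a M := by ext <;> simp [mul_apply] <;> ring
  left_inv M := by
    have := Ring.inverse_mul_cancel _ hB
    ext i j; fin_cases i <;> fin_cases j <;> simp [mul_apply] <;> grind
  right_inv x := by
    have := Ring.inverse_mul_cancel _ hB
    ext <;> simp [mul_apply, vecMul, dotProduct] <;> grind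

noncomputable def commutatorCoords₀₁ (B : Mat₂ R) (hB : IsUnit (B 0 1)) :
    Mat₂ R ≃ₗ[R] R × R × R × R where
  toFun M := (M 0 0, M 0 1, (M * B - B * M) 0 0, (M * B - B * M) 0 1)
  invFun x := !![x.1, x.2.1;
    Ring.inverse (B 0 1) * (x.2.1 * B 1 0 - x.2.2.1),
    x.1 - Ring.inverse (B 0 1) * (x.2.2.2 + x.2.1 * (B 0 0 - B 1 1))]
  map_add' M N := by ext <;> simp [mul_apply] <;> ring
  map_smul' a M := by ext <;> simp [mul_apply] <;> ring
  left_inv M := by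
    have := Ring.inverse_mul_cancel _ hB
    ext i j; fin_cases i <;> fin_cases j <;> simp [mul_apply] <;> grind
  right_inv x := by
    have := Ring.inverse_mul_cancel _ hB
    ext <;> simp [mul_apply, vecMul, dotProduct] <;> grind

noncomputable def commutatorCoordsDiag (B : Mat₂ R) (hB : IsUnit (B 0 0 - B 1 1)) :
    Mat₂ R ≃ₗ[R] R × R × R × R where
  toFun M := (M 0 0, M 0 0 - M 1 1, (M * B - B * M) 0 1, (M * B - B * M) 1 0)
  invFun x := !![x.1, Ring.inverse (B 0 0 - B 1 1) * (x.2.1 * B 0 1 - x.2.2.1);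
    Ring.inverse (B 0 0 - B 1 1) * (x.2.2.2 + x.2.1 * B 1 0), x.1 - x.2.1]
  map_add' M N := by ext <;> simp [mul_apply] <;> ring
  map_smul' a M := by ext <;> simp [mul_apply] <;> ring
  left_inv M := by
    have := Ring.inverse_mul_cancel _ hB
    ext i j; fin_cases i <;> fin_cases j <;> simp [mul_apply] <;> grind
  right_inv x := by
    have := Ring.inverse_mul_cancel _ hB
    ext <;> simp [mul_apply, vecMul, dotProduct] <;> grind

theorem exists_commutatorCoords {B : Mat₂ R}
    (hB : IsUnit (B 1 0) ∨ IsUnit (B 0 1) ∨ IsUnit (B 0 0 - B 1 1)) :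
    ∃ c : Mat₂ R ≃ₗ[R] R × R × R × R, (∀ α : R, c.symm (α, 0, 0, 0) = α • 1) ∧
      ∀ (q : R) (M : Mat₂ R), (∀ i j, q ∣ (M * B - B * M) i j) →
        q ∣ (c M).2.2.1 ∧ q ∣ (c M).2.2.2 := by
  rcases hB with hB | hB | hB
  · refine ⟨commutatorCoords₁₀ B hB, fun α => ?_, fun q M hM => ⟨hM 0 0, hM 1 0⟩⟩
    ext i j; fin_cases i <;> fin_cases j <;> simp [commutatorCoords₁₀]
  · refine ⟨commutatorCoords₀₁ B hB, fun α => ?_, fun q M hM => ⟨hM 0 0, hM 0 1⟩⟩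
    ext i j; fin_cases i <;> fin_cases j <;> simp [commutatorCoords₀₁]
  · refine ⟨commutatorCoordsDiag B hB, fun α => ?_, fun q M hM => ⟨hM 0 1, hM 1 0⟩⟩
    ext i j; fin_cases i <;> fin_cases j <;> simp [commutatorCoordsDiag]

theorem smul_mem_centralizer_of_mul_eq_zero {S : Set (Mat₂ R)} {c q : R}
    (hS : ∀ A ∈ S, ∃ (a : R) (D : Mat₂ R), A = a • 1 + c • D) (hqc : q * c = 0) (M : Mat₂ R) :
    q • M ∈ Subring.centralizer S := by
  intro A hA
  obtain ⟨a, D, rfl⟩ := hS A hA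
  simp only [add_mul, mul_add, smul_mul_smul_comm, one_mul, mul_one, mul_comm c q, hqc, zero_smul,
    mul_comm a q]

theorem smul_commutator_eq_zero {S : Set (Mat₂ R)} {a c : R} {B M : Mat₂ R}
    (hA : a • 1 + c • B ∈ S) (hM : M ∈ Subring.centralizer S) : c • (M * B - B * M) = 0 := by
  have := hM _ hA
  simp only [add_mul, mul_add, smul_mul_assoc, mul_smul_comm, one_mul, mul_one] at this
  rw [smul_sub, sub_eq_zero]
  exact (add_left_cancel this).symm

end Commutator

theorem ZMod.natCast_dvd_of_natCast_mul_eq_zero {a b n : ℕ} [NeZero n] (hab : a * b = n)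
    (ha : a ≠ 0) {x : ZMod n} (hx : (a : ZMod n) * x = 0) : (b : ZMod n) ∣ x := by
  obtain ⟨t, rfl⟩ := ZMod.natCast_zmod_surjective x
  rw [← Nat.cast_mul, ZMod.natCast_eq_zero_iff, ← hab,
    Nat.mul_dvd_mul_iff_left (Nat.pos_of_ne_zero ha)] at hx
  obtain ⟨s, rfl⟩ := hx
  exact ⟨s, Nat.cast_mul _ _⟩

section PrimePow

variable {p k : ℕ} [hp : Fact p.Prime]

theorem ZMod.natCast_dvd_of_not_isUnit {x : ZMod (p ^ k)} (hx : ¬IsUnit x) :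
    (p : ZMod (p ^ k)) ∣ x := by
  obtain ⟨t, rfl⟩ := ZMod.natCast_zmod_surjective x
  rw [ZMod.isUnit_iff_coprime] at hx
  obtain ⟨s, rfl⟩ : p ∣ t := by
    by_contra h
    exact hx ((Nat.coprime_comm.mp ((Nat.Prime.coprime_iff_not_dvd hp.out).mpr h)).pow_right k)
  exact ⟨s, Nat.cast_mul _ _⟩

theorem exists_eq_smul_one_add_smul_of_not_isUnit {B : Mat₂ (ZMod (p ^ k))}
    (h₁₀ : ¬IsUnit (B 1 0)) (h₀₁ : ¬IsUnit (B 0 1)) (hdiag : ¬IsUnit (B 0 0 - B 1 1)) :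
    ∃ (b : ZMod (p ^ k)) (D : Mat₂ (ZMod (p ^ k))), B = b • 1 + (p : ZMod (p ^ k)) • D := by
  obtain ⟨x, hx⟩ := ZMod.natCast_dvd_of_not_isUnit h₁₀
  obtain ⟨y, hy⟩ := ZMod.natCast_dvd_of_not_isUnit h₀₁
  obtain ⟨z, hz⟩ := ZMod.natCast_dvd_of_not_isUnit hdiag
  refine ⟨B 1 1, !![z, y; x, 0], ?_⟩
  ext i j; fin_cases i <;> fin_cases j <;> simp <;> grind

variable (p k) in
theorem exists_commutator_dvd (S : Set (Mat₂ (ZMod (p ^ k)))) :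
    ∃ (q : ZMod (p ^ k)) (B : Mat₂ (ZMod (p ^ k))),
      (IsUnit (B 1 0) ∨ IsUnit (B 0 1) ∨ IsUnit (B 0 0 - B 1 1)) ∧
      (∀ D, q • D ∈ Subring.centralizer S) ∧
      ∀ M ∈ Subring.centralizer S, ∀ i j, q ∣ (M * B - B * M) i j := by
  classical
  set π : ZMod (p ^ k) := (p : ZMod (p ^ k)) with hπ
  let P (j : ℕ) : Prop := ∀ A ∈ S, ∃ (a : ZMod (p ^ k)) (D : Mat₂ (ZMod (p ^ k))),
    A = a • 1 + π ^ j • D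
  have hP : P (Nat.findGreatest P k) :=
    Nat.findGreatest_spec (Nat.zero_le k) fun A _ => ⟨0, A, by simp⟩
  set j := Nat.findGreatest P k
  have hjk : j ≤ k := Nat.findGreatest_le k
  have hq (D) : π ^ (k - j) • D ∈ Subring.centralizer S := by
    refine smul_mem_centralizer_of_mul_eq_zero hP ?_ D
    rw [← pow_add, Nat.sub_add_cancel hjk, hπ, ← Nat.cast_pow, ZMod.natCast_self]
  refine ⟨π ^ (k - j), ?_⟩
  rcases hjk.eq_or_lt with hjk | hjk
  · refine ⟨!![0, 0; 1, 0], Or.inl (by simp), hq, fun M _ i l => ?_⟩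
    rw [hjk, Nat.sub_self, pow_zero]
    exact one_dvd _
  obtain ⟨A, hA, hA'⟩ : ∃ A ∈ S, ¬∃ (a : ZMod (p ^ k)) (D : Mat₂ (ZMod (p ^ k))),
      A = a • 1 + π ^ (j + 1) • D := by
    simpa [P] using Nat.findGreatest_is_greatest (Nat.lt_succ_self j) hjk
  obtain ⟨a, B, rfl⟩ := hP A hA
  refine ⟨B, ?_, hq, fun M hM i l => ?_⟩
  · by_contra! h
    obtain ⟨b, D, rfl⟩ := exists_eq_smul_one_add_smul_of_not_isUnit h.1 h.2.1 h.2.2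
    exact hA' ⟨a + π ^ j * b, D, by rw [smul_add, smul_smul, smul_smul, add_smul, pow_succ]; abel⟩
  · have h := congrFun₂ (smul_commutator_eq_zero hA hM) i l
    rw [Matrix.smul_apply, Matrix.zero_apply, smul_eq_mul] at h
    have hpow : p ^ j * p ^ (k - j) = p ^ k := by rw [← pow_add, Nat.add_sub_cancel' hjk.le]
    simpa [hπ] using ZMod.natCast_dvd_of_natCast_mul_eq_zero hpow (pow_ne_zero j hp.out.ne_zero)
      (x := (M * B - B * M) i l) (by simpa [hπ] using h)

variable (p k) in
theorem hasCentralizerShape_centralizer_of_prime_pow (S : Set (Mat₂ (ZMod (p ^ k)))) :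
    HasCentralizerShape (p ^ k) (Subring.centralizer S) := by
  obtain ⟨q, B, hB, hq, hcomm⟩ := exists_commutator_dvd p k S
  obtain ⟨c, hc₁, hc₂⟩ := exists_commutatorCoords hB
  obtain ⟨K, hQK, ⟨e⟩⟩ := exists_addEquiv_prod_of_coordinates c
    (Subring.centralizer S).toAddSubgroup q (fun α A _ => by simp [hc₁]) hq
    (fun M hM => hc₂ q M (hcomm M hM))
  exact .of_addEquiv e (.of_le hQK)

end PrimePow

theorem hasCentralizerShape_centralizer {n : ℕ} (hn : n ≠ 0) (S : Set (Mat₂ (ZMod n))) :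
    HasCentralizerShape n (Subring.centralizer S) := by
  induction n using Nat.recOnPrimeCoprime with
  | zero => exact absurd rfl hn
  | prime_pow p k hp =>
    have := Fact.mk hp
    exact hasCentralizerShape_centralizer_of_prime_pow p k S
  | coprime a b ha hb hab iha ihb =>
    let e := (ZMod.chineseRemainder hab).mapMatrix.trans (Matrix.prodRingEquiv (Fin 2) _ _)
    exact .of_addEquiv (Subring.centralizerEquivProd e S).toAddEquiv
      ((iha (by omega) _).prod hab (ihb (by omega) _))

/-- Let `Γ` be a subgroup of `GL₂(ℤ/nℤ)` and let `R` be its centralizer in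
`Mat₂(ℤ/nℤ)`.  Then, as an abelian group, `R ≅ ℤ/nℤ × ℤ/n₁ℤ × (ℤ/n₂ℤ)²` for positive integers
`n₂ ∣ n₁ ∣ n`. -/
theorem centralizer_in_mat2_structure (n : ℕ) (hn : 0 < n)
    (Γ : Subgroup (Matrix.GeneralLinearGroup (Fin 2) (ZMod n)))
    (R : AddSubgroup (Matrix (Fin 2) (Fin 2) (ZMod n)))
    (hR : (R : Set (Matrix (Fin 2) (Fin 2) (ZMod n))) =
      {M | ∀ A ∈ Γ, M * (A : Matrix (Fin 2) (Fin 2) (ZMod n)) =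
        (A : Matrix (Fin 2) (Fin 2) (ZMod n)) * M}) :
    ∃ n₁ n₂ : ℕ, 0 < n₂ ∧ n₂ ∣ n₁ ∧ n₁ ∣ n ∧
      Nonempty (R ≃+ (ZMod n × ZMod n₁ × ZMod n₂ × ZMod n₂)) := by
  have hRΓ : R = (Subring.centralizer (Units.val '' (Γ : Set _))).toAddSubgroup := by
    refine SetLike.ext' (hR.trans ?_)
    ext M
    change _ ↔ M ∈ Subring.centralizer _
    rw [Subring.mem_centralizer_iff, Set.forall_mem_image]
    exact forall₂_congr fun A _ => eq_comm
  subst hRΓ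
  exact hasCentralizerShape_centralizer hn.ne' _
end

section
/- Let ℓ be an odd prime, s a positive integer, and A ∈ Mat_2(ℤ/ℓ^s ℤ) a matrix whose reduction mod ℓ is not a scalar matrix and whose characteristic polynomial has two roots in ℤ/ℓ^s ℤ that are distinct modulo ℓ. Then A is conjugate in GL_2(ℤ/ℓ^s ℤ) to a diagonal matrix. -/
open Polynomial

theorem aux_unit (ℓ : ℕ) (hℓ : ℓ.Prime) (s : ℕ) (hs : 0 < s) (u : ZMod (ℓ ^ s))
    (h : ZMod.castHom (dvd_pow_self ℓ hs.ne') (ZMod ℓ) u ≠ 0) : IsUnit u := by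
  haveI : Fact ℓ.Prime := ⟨hℓ⟩
  haveI : NeZero (ℓ ^ s) := ⟨pow_ne_zero s hℓ.pos.ne'⟩
  rw [← ZMod.natCast_zmod_val u, ZMod.isUnit_iff_coprime, Nat.coprime_pow_right_iff hs]
  rw [Nat.coprime_comm, hℓ.coprime_iff_not_dvd, ← ZMod.natCast_eq_zero_iff]
  intro h0
  apply h
  rw [ZMod.castHom_apply, ← ZMod.natCast_val]
  exact h0

theorem aux_td {R : Type*} [CommRing R] (A : Matrix (Fin 2) (Fin 2) R) (x y : R)
    (hchar : A.charpoly = (X - C x) * (X - C y)) :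
    A.trace = x + y ∧ A.det = x * y := by
  have hexp : (X - C x) * (X - C y) = X ^ 2 - (C x + C y) * X + C x * C y := by ring
  rw [hexp] at hchar
  have ht := A.trace_eq_neg_charpoly_coeff
  have hd := A.det_eq_sign_charpoly_coeff
  rw [hchar] at ht hd
  simp [coeff_X_pow] at ht hd
  exact ⟨ht, hd⟩

theorem aux_conj {R : Type*} [CommRing R] (A P : Matrix (Fin 2) (Fin 2) R) (x y : R)
    (hP : IsUnit P) (hAP : A * P = P * Matrix.diagonal ![x, y]) :
    ∃ (Q : (Matrix (Fin 2) (Fin 2) R)ˣ) (a b : R),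
      (Q : Matrix (Fin 2) (Fin 2) R) * A * (↑Q⁻¹ : Matrix (Fin 2) (Fin 2) R)
        = Matrix.diagonal ![a, b] := by
  obtain ⟨u, rfl⟩ := hP
  refine ⟨u⁻¹, x, y, ?_⟩
  rw [inv_inv]
  calc (↑u⁻¹ : Matrix (Fin 2) (Fin 2) R) * A * ↑u
      = ↑u⁻¹ * (A * ↑u) := by rw [mul_assoc]
    _ = ↑u⁻¹ * (↑u * Matrix.diagonal ![x, y]) := by rw [hAP]
    _ = (↑u⁻¹ * ↑u) * Matrix.diagonal ![x, y] := by rw [mul_assoc]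
    _ = Matrix.diagonal ![x, y] := by rw [u.inv_mul, one_mul]

theorem aux_col {R : Type*} [CommRing R] (A P : Matrix (Fin 2) (Fin 2) R) (x y : R)
    (h1 : A 0 0 * P 0 0 + A 0 1 * P 1 0 = x * P 0 0)
    (h2 : A 1 0 * P 0 0 + A 1 1 * P 1 0 = x * P 1 0)
    (h3 : A 0 0 * P 0 1 + A 0 1 * P 1 1 = y * P 0 1)
    (h4 : A 1 0 * P 0 1 + A 1 1 * P 1 1 = y * P 1 1) :
    A * P = P * Matrix.diagonal ![x, y] := by
  ext i j
  fin_cases i <;> fin_cases j <;>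
    simp [Matrix.mul_apply, Fin.sum_univ_two, Matrix.diagonal] <;>
    [linear_combination h1; linear_combination h3; linear_combination h2; linear_combination h4]

set_option maxHeartbeats 1000000 in
/-- Let `ℓ` be an odd prime, `s` a positive integer, and
`A ∈ Mat₂(ℤ/ℓ^s ℤ)` a matrix whose reduction mod `ℓ` is not a scalar matrix and whose
characteristic polynomial has two roots `x, y ∈ ℤ/ℓ^s ℤ` that are distinct modulo `ℓ`.
Then `A` is conjugate in `GL₂(ℤ/ℓ^s ℤ)` to a diagonal matrix. -/
theorem conjugate_to_diagonal (ℓ : ℕ) (hℓ : ℓ.Prime) (hodd : Odd ℓ) (s : ℕ) (hs : 0 < s)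
    (A : Matrix (Fin 2) (Fin 2) (ZMod (ℓ ^ s)))
    (hns : ∀ c : ZMod ℓ,
      (ZMod.castHom (dvd_pow_self ℓ hs.ne') (ZMod ℓ)).mapMatrix A ≠
        c • (1 : Matrix (Fin 2) (Fin 2) (ZMod ℓ)))
    (x y : ZMod (ℓ ^ s))
    (hchar : A.charpoly = (Polynomial.X - Polynomial.C x) * (Polynomial.X - Polynomial.C y))
    (hdist : ZMod.castHom (dvd_pow_self ℓ hs.ne') (ZMod ℓ) x ≠
      ZMod.castHom (dvd_pow_self ℓ hs.ne') (ZMod ℓ) y) :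
    ∃ (P : (Matrix (Fin 2) (Fin 2) (ZMod (ℓ ^ s)))ˣ) (a b : ZMod (ℓ ^ s)),
      (P : Matrix (Fin 2) (Fin 2) (ZMod (ℓ ^ s))) * A * (↑P⁻¹ : Matrix (Fin 2) (Fin 2) (ZMod (ℓ ^ s)))
        = Matrix.diagonal ![a, b] := by
  haveI : Fact ℓ.Prime := ⟨hℓ⟩
  obtain ⟨htr, hdet⟩ := aux_td A x y hchar
  rw [Matrix.trace_fin_two] at htr
  rw [Matrix.det_fin_two] at hdet
  set f := ZMod.castHom (dvd_pow_self ℓ hs.ne') (ZMod ℓ) with hf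
  set a := A 0 0; set b := A 0 1; set c := A 1 0; set d := A 1 1
  have hftr : f a + f d = f x + f y := by rw [← map_add, ← map_add, htr]
  have hxy : f x - f y ≠ 0 := sub_ne_zero.mpr hdist
  have key : ∀ P : Matrix (Fin 2) (Fin 2) (ZMod (ℓ ^ s)), f P.det ≠ 0 →
      A * P = P * Matrix.diagonal ![x, y] →
      ∃ (Q : (Matrix (Fin 2) (Fin 2) (ZMod (ℓ ^ s)))ˣ) (u v : ZMod (ℓ ^ s)),
        (Q : Matrix (Fin 2) (Fin 2) (ZMod (ℓ ^ s))) * A *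
          (↑Q⁻¹ : Matrix (Fin 2) (Fin 2) (ZMod (ℓ ^ s))) = Matrix.diagonal ![u, v] := by
    intro P hd hAP
    exact aux_conj A P x y
      ((Matrix.isUnit_iff_isUnit_det P).mpr (aux_unit ℓ hℓ s hs _ hd)) hAP
  by_cases hb : f b ≠ 0
  · refine key !![b, b; d - y, d - x] ?_ (aux_col _ _ _ _ ?_ ?_ ?_ ?_) <;>
      simp [Matrix.det_fin_two]
    · intro h0
      exact mul_ne_zero hb (sub_ne_zero.mpr (Ne.symm hdist)) (by linear_combination h0)
    · linear_combination b * htr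
    · linear_combination d * htr - hdet
    · linear_combination b * htr
    · linear_combination d * htr - hdet
  push_neg at hb
  by_cases hc : f c ≠ 0
  · refine key !![a - y, a - x; c, c] ?_ (aux_col _ _ _ _ ?_ ?_ ?_ ?_) <;>
      simp [Matrix.det_fin_two]
    · intro h0
      exact mul_ne_zero hc hxy (by linear_combination h0)
    · linear_combination a * htr - hdet
    · linear_combination c * htr
    · linear_combination a * htr - hdet
    · linear_combination c * htr
  push_neg at hc
  by_cases hax : f a - f x ≠ 0
  · refine key !![b, a - x; d - y, c] ?_ (aux_col _ _ _ _ ?_ ?_ ?_ ?_) <;>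
      simp [Matrix.det_fin_two]
    · intro h0
      exact mul_ne_zero hax hax
        (by linear_combination h0 + (f a - f x) * hftr - f c * hb)
    · linear_combination b * htr
    · linear_combination d * htr - hdet
    · linear_combination a * htr - hdet
    · linear_combination c * htr
  push_neg at hax
  have hay : f a - f y ≠ 0 := by
    intro h0
    exact hxy (by linear_combination h0 - hax)
  refine key !![a - y, b; c, d - x] ?_ (aux_col _ _ _ _ ?_ ?_ ?_ ?_) <;>
    simp [Matrix.det_fin_two]
  · intro h0
    exact mul_ne_zero hay hay
      (by linear_combination -h0 + (f a - f y) * hftr - f c * hb)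
  · linear_combination a * htr - hdet
  · linear_combination c * htr
  · linear_combination b * htr
  · linear_combination d * htr - hdet
end

section
/- Let E and E' be non-CM elliptic curves over a field k of characteristic 0 that are isogenous over the algebraic closure. Then the group of Galois-invariant elements of Hom(Ē, Ē')/n is cyclic of order n if E and E' are isogenous over k, and cyclic of order gcd(2,n) otherwise. -/
/-! A sign character acts on `ℤ/n` either trivially, so that everything is invariant, or through
`m ↦ -m`, so that the invariants are the `2`-torsion. In a cyclic group of order `n` the `2`-torsion
is cyclic of order `gcd(2, n)`. -/

section SignCharacter

variable {Γ G : Type*} [Group Γ] [AddCommGroup G]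

lemma setOf_forall_units_int_smul_eq_of_eq_one (χ : Γ →* ℤˣ) (hχ : χ = 1) :
    {m : G | ∀ σ, (χ σ : ℤ) • m = m} = Set.univ := by
  ext m
  simp [hχ]

lemma setOf_forall_units_int_smul_eq_of_ne_one (χ : Γ →* ℤˣ) (hχ : χ ≠ 1) :
    {m : G | ∀ σ, (χ σ : ℤ) • m = m} = (nsmulAddMonoidHom 2 : G →+ G).ker := by
  obtain ⟨σ, hσ⟩ : ∃ σ, χ σ ≠ 1 := by
    by_contra! h
    exact hχ (MonoidHom.ext h)
  ext m
  have neg_eq_iff : -m = m ↔ 2 • m = 0 := by rw [two_nsmul, neg_eq_iff_add_eq_zero]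
  simp only [Set.mem_ofPred_eq, SetLike.mem_coe, AddMonoidHom.mem_ker, nsmulAddMonoidHom_apply]
  constructor
  · intro h
    simpa [(Int.units_eq_one_or _).resolve_left hσ, neg_eq_iff] using h σ
  · intro h τ
    rcases Int.units_eq_one_or (χ τ) with hτ | hτ <;> simp [hτ, neg_eq_iff.mpr h]

end SignCharacter

lemma IsAddCyclic.nonempty_ker_nsmul_two_addEquiv {G : Type*} [AddCommGroup G] [IsAddCyclic G]
    [Finite G] : Nonempty ((nsmulAddMonoidHom 2 : G →+ G).ker ≃+ ZMod (Nat.gcd 2 (Nat.card G))) :=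
  ⟨addEquivOfAddCyclicCardEq <| by
    rw [IsAddCyclic.card_nsmulAddMonoidHom_ker, Nat.card_zmod, Nat.gcd_comm]⟩

theorem galois_invariants_of_geometric_hom_mod_n_general
    (Γ : Type) [Group Γ]              -- the absolute Galois group of `k`
    (χ : Γ →* ℤˣ)                     -- the character through which `Γ` acts on `Hom(Ē,Ē') ≅ ℤφ`
    (n : ℕ) (hn : 0 < n)
    (H : AddSubgroup (ZMod n))
    (hH : (H : Set (ZMod n)) = {m : ZMod n | ∀ σ : Γ, ((χ σ : ℤ)) • m = m}) :
    (χ = 1 → Nonempty (H ≃+ ZMod n)) ∧ (χ ≠ 1 → Nonempty (H ≃+ ZMod (Nat.gcd 2 n))) := by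
  have : NeZero n := ⟨hn.ne'⟩
  constructor
  · intro hχ
    obtain rfl : H = ⊤ := SetLike.coe_injective <| by
      rw [hH, setOf_forall_units_int_smul_eq_of_eq_one χ hχ, AddSubgroup.coe_top]
    exact ⟨AddSubgroup.topEquiv⟩
  · intro hχ
    obtain rfl : H = (nsmulAddMonoidHom 2).ker := SetLike.coe_injective <| by
      rw [hH, setOf_forall_units_int_smul_eq_of_ne_one χ hχ]
    have h := IsAddCyclic.nonempty_ker_nsmul_two_addEquiv (G := ZMod n)
    rwa [Nat.card_zmod] at h

/-- Let `E` and `E'` be non-CM elliptic curves over a field `k` of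
characteristic `0` that are isogenous over the algebraic closure.  The geometric Hom group
`Hom(Ē, Ē')` is infinite cyclic, generated by a cyclic isogeny `φ`, and the absolute Galois
group `Γ = Gal(k̄/k)` acts on it through a character `χ : Γ →* ℤˣ = {±1}` which is trivial
exactly when `E` and `E'` are isogenous over `k`.  The theorem asserts that the group of
Galois-invariant elements of `Hom(Ē, Ē')/n ≅ ℤ/nℤ` (with `Γ` acting through `χ`) is cyclic
of order `n` if `E` and `E'` are `k`-isogenous (i.e. `χ = 1`), and cyclic of order
`gcd(2, n)` otherwise (i.e. when `χ ≠ 1`). -/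
theorem galois_invariants_of_geometric_hom_mod_n
    (k : Type) [Field k] [CharZero k]
    (Γ : Type) [Group Γ]              -- the absolute Galois group of `k`
    (χ : Γ →* ℤˣ)                     -- the character through which `Γ` acts on `Hom(Ē,Ē') ≅ ℤφ`
    (n : ℕ) (hn : 0 < n)
    (H : AddSubgroup (ZMod n))
    (hH : (H : Set (ZMod n)) = {m : ZMod n | ∀ σ : Γ, ((χ σ : ℤ)) • m = m}) :
    (χ = 1 → Nonempty (H ≃+ ZMod n)) ∧ (χ ≠ 1 → Nonempty (H ≃+ ZMod (Nat.gcd 2 n))) :=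
  galois_invariants_of_geometric_hom_mod_n_general Γ χ n hn H hH
end
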